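/- arXiv:2205.00438 — 11 statements merged into one kernel-verified Lean document; each statement's English description precedes it below -/
import Mathlib

section
/- For the finite chain [n] = {1,…,n} with n ≥ 1, let K_p = {α ∈ Reg(OCT_n) : |Im α| = p}. Then |K_1| = n, and for every p with 2 ≤ p ≤ n, |K_p| = (n − p + 1)². -/
/-- `α` is a (full) contraction of the chain `{1, …, n}` (modelled as `Fin n`):
`|xα - yα| ≤ |x - y|` for all `x, y`. -/
def IsContraction {n : ℕ} (α : Function.End (Fin n)) : Prop :=
  ∀ x y : Fin n, |((α x : ℕ) : ℤ) - ((α y : ℕ) : ℤ)| ≤ |((x : ℕ) : ℤ) - ((y : ℕ) : ℤ)|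

/-- `OCT n`: the order-preserving full contractions of the chain. -/
def OCT (n : ℕ) : Set (Function.End (Fin n)) :=
  {α | IsContraction α ∧ Monotone α}

/-- `ORCT n`: the order-preserving or order-reversing full contractions of the chain. -/
def ORCT (n : ℕ) : Set (Function.End (Fin n)) :=
  {α | IsContraction α ∧ (Monotone α ∨ Antitone α)}

/-- The regular elements of `OCT n`. -/
def RegOCT (n : ℕ) : Set (Function.End (Fin n)) :=
  {α | α ∈ OCT n ∧ ∃ β ∈ OCT n, α * β * α = α}

/-- The regular elements of `ORCT n`. -/
def RegORCT (n : ℕ) : Set (Function.End (Fin n)) :=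
  {α | α ∈ ORCT n ∧ ∃ β ∈ ORCT n, α * β * α = α}

/-- `|Im α|`, the rank of a transformation. -/
noncomputable def imCard {n : ℕ} (α : Function.End (Fin n)) : ℕ :=
  (Set.range α).ncard

/-!
If `α * β * α = α` with `α, β` monotone contractions, let `a = α ⊥` and `b = α ⊤` be the extreme
values of `α`. Then `α (β a) = a` and `α (β b) = b`; contraction of `β` gives
`β b - β a ≤ b - a` and contraction of `α` the reverse inequality. So `α` is constant `a` up to
`β a`, translates `[β a, β b]` onto `[a, b]`, and is constant `b` beyond `β b`. Conversely every
such map is regular, with an inverse of the same shape. A regular element of rank `d + 1` is thus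
given by the two left endpoints `i, j ∈ [0, n - d - 1]`, which can be read off from it when
`d ≥ 1`; for `d = 0` only `j` matters.
-/

section

variable {n : ℕ}

lemma mem_OCT_iff {α : Function.End (Fin n)} :
    α ∈ OCT n ↔ Monotone α ∧ ∀ x y : Fin n, x ≤ y → (α y : ℕ) + x ≤ α x + y := by
  refine and_comm.trans (and_congr_right fun hα => ?_)
  have key : ∀ x y : Fin n, x ≤ y → (|((α x : ℕ) : ℤ) - (α y : ℕ)| ≤ |((x : ℕ) : ℤ) - (y : ℕ)| ↔
      (α y : ℕ) + x ≤ α x + y) := by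
    intro x y hxy
    have hαxy := hα hxy
    rw [abs_of_nonpos (by omega), abs_of_nonpos (by omega)]
    omega
  refine ⟨fun h x y hxy => (key x y hxy).1 (h x y), fun h x y => ?_⟩
  rcases le_total x y with hxy | hxy
  · exact (key x y hxy).2 (h x y hxy)
  · rw [abs_sub_comm, abs_sub_comm (x : ℤ)]
    exact (key y x hxy).2 (h y x hxy)

-- Indexing `i, j` by `Fin (n - d)` keeps `i + d` and `j + d` inside `Fin n`.
def clampShift (d : ℕ) (i j : Fin (n - d)) : Function.End (Fin n) :=
  fun x => ⟨j + min d (x - i), by omega⟩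

@[simp]
lemma val_clampShift_apply (d : ℕ) (i j : Fin (n - d)) (x : Fin n) :
    (clampShift d i j x : ℕ) = j + min d (x - i) :=
  rfl

lemma clampShift_mem_OCT (d : ℕ) (i j : Fin (n - d)) : clampShift d i j ∈ OCT n := by
  refine mem_OCT_iff.2 ⟨fun x y hxy => ?_, fun x y hxy => ?_⟩ <;>
  · simp only [Fin.le_def, val_clampShift_apply] at hxy ⊢
    omega

lemma clampShift_mem_RegOCT (d : ℕ) (i j : Fin (n - d)) : clampShift d i j ∈ RegOCT n := by
  refine ⟨clampShift_mem_OCT d i j, clampShift d j i, clampShift_mem_OCT d j i, ?_⟩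
  funext x
  apply Fin.ext
  show (clampShift d i j (clampShift d j i (clampShift d i j x)) : ℕ) = clampShift d i j x
  simp only [val_clampShift_apply]
  omega

lemma imCard_clampShift (d : ℕ) (i j : Fin (n - d)) : imCard (clampShift d i j) = d + 1 := by
  have hrange : Fin.val '' Set.range (clampShift d i j) = Set.Icc (j : ℕ) (j + d) := by
    ext y
    constructor
    · rintro ⟨_, ⟨x, rfl⟩, rfl⟩
      simp only [val_clampShift_apply, Set.mem_Icc]
      omega
    · rintro ⟨hjy, hyd⟩
      refine ⟨_, ⟨⟨i + (y - j), by omega⟩, rfl⟩, ?_⟩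
      simp only [val_clampShift_apply]
      omega
  rw [imCard, ← Set.ncard_image_of_injective _ Fin.val_injective, hrange, Set.ncard_Icc_nat]
  omega

lemma eq_right_of_clampShift_eq {d : ℕ} {i j i' j' : Fin (n - d)}
    (h : clampShift d i j = clampShift d i' j') : j = j' := by
  have h0 := congrArg Fin.val (congrFun h ⟨0, by have := i.pos; omega⟩)
  simp only [val_clampShift_apply] at h0
  exact Fin.ext (by omega)

lemma le_left_of_clampShift_eq {d : ℕ} (hd : 0 < d) {i j i' j' : Fin (n - d)}
    (h : clampShift d i j = clampShift d i' j') : i' ≤ i := by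
  have hj := eq_right_of_clampShift_eq h
  have h1 := congrArg Fin.val (congrFun h ⟨(i : ℕ) + 1, by omega⟩)
  simp only [val_clampShift_apply, hj] at h1
  rw [Fin.le_def]
  omega

lemma clampShift_injective {d : ℕ} (hd : 0 < d) :
    Function.Injective (fun ij : Fin (n - d) × Fin (n - d) => clampShift d ij.1 ij.2) :=
  fun _ _ h => Prod.ext (le_antisymm (le_left_of_clampShift_eq hd h.symm)
    (le_left_of_clampShift_eq hd h)) (eq_right_of_clampShift_eq h)

lemma clampShift_zero_left (i i' j : Fin (n - 0)) : clampShift 0 i j = clampShift 0 i' j := by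
  funext x
  apply Fin.ext
  simp

variable [NeZero n]

lemma exists_eq_clampShift_of_mem_RegOCT {α : Function.End (Fin n)}
    (hα : α ∈ RegOCT n) : ∃ d, ∃ i j : Fin (n - d), α = clampShift d i j := by
  obtain ⟨hαOCT, β, hβOCT, hαβα⟩ := hα
  obtain ⟨hαmono, hαstretch⟩ := mem_OCT_iff.1 hαOCT
  obtain ⟨hβmono, hβstretch⟩ := mem_OCT_iff.1 hβOCT
  set a := α ⊥
  set b := α ⊤
  have hab : a ≤ b := hαmono bot_le
  have hu : α (β a) = a := congrFun hαβα ⊥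
  have hv : α (β b) = b := congrFun hαβα ⊤
  have huv : β a ≤ β b := hβmono hab
  have hβab := hβstretch a b hab
  have hαuv := hαstretch _ _ huv
  rw [hu, hv] at hαuv
  have hshape : ∀ x, (α x : ℕ) = a + min ((b : ℕ) - a) ((x : ℕ) - β a) := by
    intro x
    have hax : a ≤ α x := hαmono bot_le
    have hxb : α x ≤ b := hαmono le_top
    rcases le_total x (β a) with hxu | hux
    · have := hαmono hxu
      rw [hu] at this
      omega
    rcases le_total x (β b) with hxv | hvx
    · have := hαstretch _ _ hux
      have := hαstretch _ _ hxv
      omega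
    · have := hαmono hvx
      omega
  exact ⟨(b : ℕ) - a, ⟨β a, by omega⟩, ⟨a, by omega⟩, funext fun x => Fin.ext (hshape x)⟩

lemma setOf_mem_RegOCT_imCard_eq (d : ℕ) :
    {α : Function.End (Fin n) | α ∈ RegOCT n ∧ imCard α = d + 1} =
      Set.range (fun ij : Fin (n - d) × Fin (n - d) => clampShift d ij.1 ij.2) := by
  ext α
  constructor
  · rintro ⟨hα, hcard⟩
    obtain ⟨d', i, j, rfl⟩ := exists_eq_clampShift_of_mem_RegOCT hα
    obtain rfl : d' = d := by simpa [imCard_clampShift] using hcard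
    exact ⟨(i, j), rfl⟩
  · rintro ⟨⟨i, j⟩, rfl⟩
    exact ⟨clampShift_mem_RegOCT d i j, imCard_clampShift d i j⟩

lemma ncard_setOf_mem_RegOCT_imCard_eq_one :
    {α : Function.End (Fin n) | α ∈ RegOCT n ∧ imCard α = 1}.ncard = n := by
  let i₀ : Fin (n - 0) := ⟨0, Nat.pos_of_neZero n⟩
  have hrange : Set.range (fun ij : Fin (n - 0) × Fin (n - 0) => clampShift 0 ij.1 ij.2) =
      Set.range (clampShift 0 i₀) := by
    ext α
    constructor
    · rintro ⟨⟨i, j⟩, rfl⟩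
      exact ⟨j, clampShift_zero_left i₀ i j⟩
    · rintro ⟨j, rfl⟩
      exact ⟨(i₀, j), rfl⟩
  rw [← zero_add 1, setOf_mem_RegOCT_imCard_eq, hrange,
    Set.ncard_range_of_injective fun _ _ h => eq_right_of_clampShift_eq h, Nat.card_eq_fintype_card,
    Fintype.card_fin, Nat.sub_zero]

lemma ncard_setOf_mem_RegOCT_imCard_eq_succ {d : ℕ} (hd : 0 < d) :
    {α : Function.End (Fin n) | α ∈ RegOCT n ∧ imCard α = d + 1}.ncard = (n - d) ^ 2 := by
  rw [setOf_mem_RegOCT_imCard_eq, Set.ncard_range_of_injective (clampShift_injective hd),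
    Nat.card_eq_fintype_card, Fintype.card_prod, Fintype.card_fin, sq]

end

/-- for `K_p = {α ∈ Reg(OCT_n) : |Im α| = p}` one has `|K_1| = n` and
`|K_p| = (n - p + 1)²` for `2 ≤ p ≤ n`. -/
theorem stmt_0 (n : ℕ) (hn : 1 ≤ n) :
    ({α : Function.End (Fin n) | α ∈ RegOCT n ∧ imCard α = 1}).ncard = n ∧
    ∀ p : ℕ, 2 ≤ p → p ≤ n →
      ({α : Function.End (Fin n) | α ∈ RegOCT n ∧ imCard α = p}).ncard = (n - p + 1) ^ 2 := by
  have : NeZero n := ⟨by omega⟩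
  refine ⟨ncard_setOf_mem_RegOCT_imCard_eq_one, fun p hp hpn => ?_⟩
  obtain ⟨d, rfl⟩ : ∃ d, p = d + 1 := ⟨p - 1, by omega⟩
  rw [ncard_setOf_mem_RegOCT_imCard_eq_succ (by omega : 0 < d)]
  congr 1
  omega
end

section
/- For every n ≥ 1, the number of regular elements of the semigroup OCT_n of order-preserving full contractions of the chain [n] is |Reg(OCT_n)| = (n(n−1)(2n−1) + 6n)/6. -/
/-!
If `α * β * α = α` in `OCT n`, then `β ∘ α` moves the least and the greatest values of `α` to
points exactly as far apart as those values: each of the two contractions can only shrink that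
distance. A monotone contraction which climbs by `d` over an interval of length `d` and takes its
extreme values there is a *ramp*: constant `a` up to `u`, then `x ↦ a + (x - u)`, then constant
`a + d`. Conversely, every such ramp is regular, with the ramp that swaps `a` and `u` as inverse.
So the regular elements are the `n` constants together with `(n - d)²` ramps of each height
`1 ≤ d < n`, and `n + ∑_{k < n} k² = (n(n-1)(2n-1) + 6n)/6`.
-/

open Finset

namespace OCT

variable {n : ℕ}

lemma isContraction_iff_of_monotone {α : Function.End (Fin n)} (hα : Monotone α) :
    IsContraction α ↔ ∀ x y : Fin n, x ≤ y → (α y : ℕ) + x ≤ α x + y := by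
  have key : ∀ x y : Fin n, x ≤ y →
      (|((α x : ℕ) : ℤ) - ((α y : ℕ) : ℤ)| ≤ |((x : ℕ) : ℤ) - ((y : ℕ) : ℤ)| ↔
        (α y : ℕ) + x ≤ α x + y) := by
    intro x y hxy
    have hαxy : (α x : ℕ) ≤ α y := hα hxy
    have hxy' : (x : ℕ) ≤ y := hxy
    rw [abs_of_nonpos (by omega), abs_of_nonpos (by omega)]
    omega
  refine ⟨fun h x y hxy => (key x y hxy).1 (h x y), fun h x y => ?_⟩
  rcases le_total x y with hxy | hyx
  · exact (key x y hxy).2 (h x y hxy)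
  · rw [abs_sub_comm, abs_sub_comm (x : ℤ)]
    exact (key y x hyx).2 (h y x hyx)

/-- The outer `min` only keeps the value inside `Fin n`; it is inactive when `a + d < n`. -/
def ramp (n a d u : ℕ) : Function.End (Fin n) :=
  fun x => ⟨min (a + min d (x - u)) (n - 1), by omega⟩

lemma ramp_val {a d u : ℕ} (had : a + d < n) (x : Fin n) :
    (ramp n a d u x : ℕ) = a + min d (x - u) := by
  simp only [ramp]
  omega

lemma ramp_mem_OCT (a d u : ℕ) : ramp n a d u ∈ OCT n := by
  have hmono : Monotone (ramp n a d u) := fun x y (hxy : (x : ℕ) ≤ y) => by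
    show min (a + min d (x - u)) (n - 1) ≤ min (a + min d (y - u)) (n - 1)
    omega
  refine ⟨(isContraction_iff_of_monotone hmono).2 fun x y (hxy : (x : ℕ) ≤ y) => ?_, hmono⟩
  show min (a + min d (y - u)) (n - 1) + x ≤ min (a + min d (x - u)) (n - 1) + y
  omega

lemma ramp_mul_ramp_mul_ramp {a d u : ℕ} (had : a + d < n) (hud : u + d < n) :
    ramp n a d u * ramp n u d a * ramp n a d u = ramp n a d u := by
  funext x
  apply Fin.ext
  show (ramp n a d u (ramp n u d a (ramp n a d u x)) : ℕ) = ramp n a d u x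
  rw [ramp_val had, ramp_val hud, ramp_val had]
  omega

lemma ramp_mem_RegOCT {a d u : ℕ} (had : a + d < n) (hud : u + d < n) :
    ramp n a d u ∈ RegOCT n :=
  ⟨ramp_mem_OCT a d u, ramp n u d a, ramp_mem_OCT u d a, ramp_mul_ramp_mul_ramp had hud⟩

lemma ramp_height_zero (a u : ℕ) : ramp n a 0 u = ramp n a 0 0 := by
  funext x
  simp [ramp]

section Regular

variable {m : ℕ} {α : Function.End (Fin (m + 1))}

lemma eq_ramp_of_mem_OCT (hα : α ∈ OCT (m + 1)) {p q : Fin (m + 1)} (hp : α p = α 0)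
    (hq : α q = α (Fin.last m)) (hpq : (q : ℕ) = p + ((α (Fin.last m) : ℕ) - α 0)) :
    α = ramp (m + 1) (α 0) ((α (Fin.last m) : ℕ) - α 0) p := by
  obtain ⟨hcon, hmono⟩ := hα
  have hcon' := (isContraction_iff_of_monotone hmono).1 hcon
  funext x
  apply Fin.ext
  have hq' : (α q : ℕ) = α (Fin.last m) := by rw [hq]
  have hp' : (α p : ℕ) = α 0 := by rw [hp]
  have hx0 : (α 0 : ℕ) ≤ α x := hmono (Fin.zero_le x)
  have hxl : (α x : ℕ) ≤ α (Fin.last m) := hmono (Fin.le_last x)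
  rw [ramp_val (by omega)]
  rcases le_total x p with hxp | hpx
  · have : (α x : ℕ) ≤ α p := hmono hxp
    have : (x : ℕ) ≤ p := hxp
    omega
  rcases le_total x q with hxq | hqx
  · have := hcon' p x hpx
    have := hcon' x q hxq
    have : (p : ℕ) ≤ x := hpx
    omega
  · have : (α q : ℕ) ≤ α x := hmono hqx
    have : (q : ℕ) ≤ x := hqx
    omega

lemma exists_shift_of_mem_RegOCT (hα : α ∈ RegOCT (m + 1)) :
    ∃ p q : Fin (m + 1), α p = α 0 ∧ α q = α (Fin.last m) ∧
      (q : ℕ) = p + ((α (Fin.last m) : ℕ) - α 0) := by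
  obtain ⟨⟨hcon, hmono⟩, β, ⟨hβcon, hβmono⟩, hαβα⟩ := hα
  have hfix : ∀ x, α (β (α x)) = α x := fun x => congrFun hαβα x
  refine ⟨β (α 0), β (α (Fin.last m)), hfix 0, hfix _, ?_⟩
  have hlast : α 0 ≤ α (Fin.last m) := hmono (Fin.zero_le _)
  have hβ := (isContraction_iff_of_monotone hβmono).1 hβcon _ _ hlast
  have hα := (isContraction_iff_of_monotone hmono).1 hcon _ _ (hβmono hlast)
  rw [hfix, hfix] at hα
  have : (α 0 : ℕ) ≤ α (Fin.last m) := hlast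
  omega

end Regular

/-- The parameters `(a, d, u)` of the distinct ramps: a constant map is recorded with `u = 0`. -/
def rampParams (n : ℕ) : Finset (ℕ × ℕ × ℕ) :=
  (range n).biUnion fun d => range (n - d) ×ˢ {d} ×ˢ (if d = 0 then {0} else range (n - d))

lemma mem_rampParams {a d u : ℕ} :
    (a, d, u) ∈ rampParams n ↔ a + d < n ∧ u + d < n ∧ (d = 0 → u = 0) := by
  simp only [rampParams, mem_biUnion, mem_range, mem_product, mem_singleton]
  constructor
  · rintro ⟨d, hd, ha, rfl, hu⟩
    split_ifs at hu with hd0 <;> simp only [mem_singleton, mem_range] at hu <;> omega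
  · rintro ⟨had, hud, hu⟩
    refine ⟨d, by omega, by omega, rfl, ?_⟩
    split_ifs with hd0
    · exact mem_singleton.2 (hu hd0)
    · exact mem_range.2 (by omega)

lemma sum_range_succ_sq_mul_six (m : ℕ) :
    (∑ i ∈ range (m + 1), i ^ 2) * 6 = m * (m + 1) * (2 * m + 1) := by
  induction m with
  | zero => simp
  | succ k ih => rw [sum_range_succ, add_mul, ih]; ring

lemma card_rampParams (n : ℕ) : #(rampParams n) * 6 = n * (n - 1) * (2 * n - 1) + 6 * n := by
  have hdisj : (range n : Set ℕ).PairwiseDisjoint fun d =>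
      range (n - d) ×ˢ {d} ×ˢ (if d = 0 then {0} else range (n - d)) := by
    intro d₁ _ d₂ _ hne
    simp only [Function.onFun, disjoint_left, mem_product, mem_singleton]
    rintro t ⟨-, h₁, -⟩ ⟨-, h₂, -⟩
    exact hne (h₁ ▸ h₂)
  rw [rampParams, card_biUnion hdisj]
  simp only [card_product, card_range, card_singleton, apply_ite card, one_mul]
  obtain _ | m := n
  · simp
  rw [sum_range_succ']
  simp only [add_eq_zero, one_ne_zero, and_false, if_false, if_true, Nat.add_sub_add_right]
  have hsq : ∑ d ∈ range m, (m - d) * (m - d) = ∑ i ∈ range (m + 1), i ^ 2 := by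
    rw [← sum_range_reflect (· ^ 2) (m + 1), sum_range_succ]
    simp [sq]
  rw [hsq, add_mul, sum_range_succ_sq_mul_six]
  simp only [Nat.sub_zero, Nat.add_sub_cancel]
  rw [show 2 * (m + 1) - 1 = 2 * m + 1 by omega]
  ring

section Count

variable {m : ℕ}

lemma regOCT_eq_image_rampParams :
    RegOCT (m + 1) =
      (fun t : ℕ × ℕ × ℕ => ramp (m + 1) t.1 t.2.1 t.2.2) '' rampParams (m + 1) := by
  ext α
  constructor
  · intro hα
    obtain ⟨p, q, hp, hq, hpq⟩ := exists_shift_of_mem_RegOCT hα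
    have hα_eq := eq_ramp_of_mem_OCT hα.1 hp hq hpq
    have hle : (α 0 : ℕ) ≤ α (Fin.last m) := hα.1.2 (Fin.zero_le _)
    have hlast := (α (Fin.last m)).isLt
    by_cases hd : (α (Fin.last m) : ℕ) - α 0 = 0
    · refine ⟨(α 0, 0, 0), mem_rampParams.2 ⟨by omega, by omega, fun _ => rfl⟩, ?_⟩
      exact (hα_eq.trans (by rw [hd, ramp_height_zero])).symm
    · have := q.isLt
      exact ⟨(α 0, (α (Fin.last m) : ℕ) - α 0, p),
        mem_rampParams.2 ⟨by omega, by omega, fun h => absurd h hd⟩, hα_eq.symm⟩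
  · rintro ⟨⟨a, d, u⟩, ht, rfl⟩
    obtain ⟨had, hud, -⟩ := mem_rampParams.1 ht
    exact ramp_mem_RegOCT had hud

lemma injOn_ramp_rampParams :
    Set.InjOn (fun t : ℕ × ℕ × ℕ => ramp (m + 1) t.1 t.2.1 t.2.2) (rampParams (m + 1)) := by
  rintro ⟨a, d, u⟩ ht ⟨a', d', u'⟩ ht' h
  obtain ⟨had, hud, hu⟩ := mem_rampParams.1 ht
  obtain ⟨had', hud', hu'⟩ := mem_rampParams.1 ht'
  have hval : ∀ x : Fin (m + 1), a + min d (x - u) = a' + min d' (x - u') := fun x => by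
    rw [← ramp_val had, ← ramp_val had']
    exact congrArg (fun f : Function.End (Fin (m + 1)) => (f x : ℕ)) h
  have h0 := hval 0
  have hl := hval (Fin.last m)
  have hu₀ := hval ⟨u, by omega⟩
  have hu₀' := hval ⟨u', by omega⟩
  simp only [Fin.val_zero, Fin.val_last] at h0 hl hu₀ hu₀'
  simp only [Prod.mk.injEq]
  omega

end Count

end OCT

/-- `|Reg(OCT_n)| = (n(n-1)(2n-1) + 6n)/6`. -/
theorem stmt_1 (n : ℕ) (hn : 1 ≤ n) :
    (RegOCT n).ncard = (n * (n - 1) * (2 * n - 1) + 6 * n) / 6 := by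
  obtain ⟨m, rfl⟩ := Nat.exists_eq_add_of_le' hn
  rw [OCT.regOCT_eq_image_rampParams, OCT.injOn_ramp_rampParams.ncard_image,
    Set.ncard_coe_finset]
  have := OCT.card_rampParams (m + 1)
  omega
end

section
/- For every n ≥ 1, the number of regular elements of the semigroup ORCT_n of order-preserving or order-reversing full contractions of the chain [n] is |Reg(ORCT_n)| = (n(n−1)(2n−1) + 6n)/3 − n. -/
/-!
A monotone regular element `α = α β α` of `ORCT n` is a ramp: with `d = α (n - 1) - α 0`, the points
`u = β (α 0)` and `w = β (α (n - 1))` satisfy `d ≤ w - u` (as `α` is a contraction) and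
`w - u ≤ d` (as `β` is), so `α` rises with slope one on `[u, u + d]` and is constant outside.
Conversely every ramp is regular, an inverse being the ramp with the roles of image and slope
window exchanged. Non-constant ramps are counted by the height `d ≥ 1` and two positions in
`[0, n - 1 - d]`, giving `∑_{j<n} j²`. Right composition with the reversal `x ↦ n - 1 - x` swaps
the monotone and the antitone regular elements, which share only the `n` constants; hence
`|Reg ORCT_n| = n + 2 ∑_{j<n} j²`.
-/

open Finset in
theorem six_mul_sum_range_sq (n : ℕ) :
    6 * ∑ j ∈ range n, j ^ 2 = n * (n - 1) * (2 * n - 1) := by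
  induction n with
  | zero => simp
  | succ n ih =>
    rw [sum_range_succ, mul_add, ih]
    rcases n with _ | n
    · simp
    · rw [show 2 * (n + 1 + 1) - 1 = 2 * n + 3 by omega, show 2 * (n + 1) - 1 = 2 * n + 1 by omega]
      simp only [Nat.add_sub_cancel]
      ring

section Contractions

variable {n : ℕ}

theorem IsContraction.mul {α β : Function.End (Fin n)} (hα : IsContraction α)
    (hβ : IsContraction β) : IsContraction (α * β) :=
  fun x y => (hα (β x) (β y)).trans (hβ x y)

def reversal (n : ℕ) : Function.End (Fin n) := Fin.rev

theorem isContraction_reversal : IsContraction (reversal n) := by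
  intro x y
  simp only [reversal, Fin.val_rev, abs_eq_max_neg]
  omega

theorem mul_mem_ORCT {α β : Function.End (Fin n)} (hα : α ∈ ORCT n) (hβ : β ∈ ORCT n) :
    α * β ∈ ORCT n := by
  obtain ⟨hαc, hα | hα⟩ := hα <;> obtain ⟨hβc, hβ | hβ⟩ := hβ
  exacts [⟨hαc.mul hβc, .inl (hα.comp hβ)⟩, ⟨hαc.mul hβc, .inr (hα.comp_antitone hβ)⟩,
    ⟨hαc.mul hβc, .inr (hα.comp_monotone hβ)⟩, ⟨hαc.mul hβc, .inl (hα.comp hβ)⟩]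

theorem reversal_mem_ORCT : reversal n ∈ ORCT n :=
  ⟨isContraction_reversal, .inr Fin.rev_anti⟩

theorem reversal_mul_reversal : reversal n * reversal n = 1 :=
  funext Fin.rev_rev

theorem mul_reversal_mem_RegORCT {α : Function.End (Fin n)} (hα : α ∈ RegORCT n) :
    α * reversal n ∈ RegORCT n := by
  obtain ⟨hα, β, hβ, hαβα⟩ := hα
  refine ⟨mul_mem_ORCT hα reversal_mem_ORCT, reversal n * β,
    mul_mem_ORCT reversal_mem_ORCT hβ, ?_⟩
  rw [show α * reversal n * (reversal n * β) * (α * reversal n)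
      = α * (reversal n * reversal n) * β * α * reversal n by simp only [mul_assoc],
    reversal_mul_reversal, mul_one, hαβα]

theorem mul_reversal_mem_RegORCT_iff {α : Function.End (Fin n)} :
    α * reversal n ∈ RegORCT n ↔ α ∈ RegORCT n := by
  refine ⟨fun h => ?_, mul_reversal_mem_RegORCT⟩
  simpa only [mul_assoc, reversal_mul_reversal, mul_one] using mul_reversal_mem_RegORCT h

theorem monotone_mul_reversal_iff {α : Function.End (Fin n)} :
    Monotone (α * reversal n) ↔ Antitone α := by
  refine ⟨fun h x y hxy => ?_, fun h => h.comp Fin.rev_anti⟩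
  have key : α (Fin.rev (Fin.rev y)) ≤ α (Fin.rev (Fin.rev x)) := h (Fin.rev_le_rev.mpr hxy)
  simpa only [Fin.rev_rev] using key

end Contractions

section Ramps

variable {n : ℕ}

/-- Constant `a` up to `s` (the subtraction `x - s` truncates), slope one on `[s, s + d]`, constant
`a + d` after. The cap at `n - 1` only keeps the value in `Fin n`; it is inactive when `a + d < n`. -/
def ramp (n d a s : ℕ) : Function.End (Fin n) :=
  fun x => ⟨min (a + min d (x - s)) (n - 1), by have := x.2; omega⟩

theorem ramp_val {d a s : ℕ} (had : a + d < n) (x : Fin n) :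
    (ramp n d a s x : ℕ) = a + min d (x - s) := by
  simp only [ramp]
  omega

theorem ramp_zero (v : Fin n) (s : ℕ) : ramp n 0 v s = Function.const (Fin n) v := by
  funext x
  ext
  simp only [ramp, Function.const_apply]
  omega

theorem monotone_ramp (d a s : ℕ) : Monotone (ramp n d a s) := by
  intro x y hxy
  simp only [ramp, Fin.mk_le_mk]
  omega

theorem isContraction_ramp (d a s : ℕ) : IsContraction (ramp n d a s) := by
  intro x y
  simp only [ramp, abs_eq_max_neg]
  omega

theorem ramp_mul_ramp_mul_ramp {d a s : ℕ} (had : a + d < n) (hsd : s + d < n) :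
    ramp n d a s * ramp n d s a * ramp n d a s = ramp n d a s := by
  funext x
  ext
  change (ramp n d a s (ramp n d s a (ramp n d a s x)) : ℕ) = ramp n d a s x
  rw [ramp_val had, ramp_val hsd, ramp_val had]
  omega

theorem ramp_mem_RegORCT {d a s : ℕ} (had : a + d < n) (hsd : s + d < n) :
    ramp n d a s ∈ RegORCT n :=
  ⟨⟨isContraction_ramp d a s, .inl (monotone_ramp d a s)⟩, ramp n d s a,
    ⟨isContraction_ramp d s a, .inl (monotone_ramp d s a)⟩, ramp_mul_ramp_mul_ramp had hsd⟩

theorem const_mem_RegORCT (v : Fin n) :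
    (Function.const (Fin n) v : Function.End (Fin n)) ∈ RegORCT n := by
  have hv := v.2
  rw [← ramp_zero v 0]
  exact ramp_mem_RegORCT hv (by omega)

theorem exists_eq_ramp {α β : Function.End (Fin n)} (hn : 0 < n) (hα : IsContraction α)
    (hαm : Monotone α) (hβ : IsContraction β) (hαβα : α * β * α = α) :
    ∃ d a s, a + d < n ∧ s + d < n ∧ α = ramp n d a s := by
  set first : Fin n := ⟨0, hn⟩
  set last : Fin n := ⟨n - 1, by omega⟩
  set u := β (α first)
  set w := β (α last)
  have hu : α u = α first := congrFun hαβα first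
  have hw : α w = α last := congrFun hαβα last
  have hbounds (x : Fin n) : α first ≤ α x ∧ α x ≤ α last :=
    ⟨hαm (Fin.mk_le_of_le_val (Nat.zero_le _)), hαm (Fin.le_def.mpr (by simp [last]; omega))⟩
  have hwu : w < u → α w ≤ α u := fun h => hαm h.le
  have hβuw := hβ (α first) (α last)
  have hαuw := hα u w
  have hlohi := hbounds first
  simp only [abs_eq_max_neg, Fin.le_def, Fin.lt_def] at hβuw hαuw hwu hlohi
  refine ⟨α last - α first, α first, u, by omega, by omega, ?_⟩
  funext x
  ext
  have hux := hα x u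
  have hxw := hα w x
  have hxu : x ≤ u → α x ≤ α u := fun h => hαm h
  have hwx : w ≤ x → α w ≤ α x := fun h => hαm h
  have hx := hbounds x
  simp only [abs_eq_max_neg, Fin.le_def] at hux hxw hxu hwx hx
  rw [ramp_val (by omega)]
  omega

end Ramps

section Counting

open Finset

variable {n : ℕ}

instance : Finite (Function.End (Fin n)) := inferInstanceAs (Finite (Fin n → Fin n))

def constants (n : ℕ) : Set (Function.End (Fin n)) := Set.range (Function.const (Fin n))

/-- `⟨d, (a, s)⟩` stands for the non-constant ramp `ramp n d a s` with `a + d, s + d < n`. -/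
def rampParams (n : ℕ) : Finset (Σ _ : ℕ, ℕ × ℕ) :=
  (Ico 1 n).sigma fun d => range (n - d) ×ˢ range (n - d)

theorem mem_rampParams {p : Σ _ : ℕ, ℕ × ℕ} :
    p ∈ rampParams n ↔ 1 ≤ p.1 ∧ p.2.1 + p.1 < n ∧ p.2.2 + p.1 < n := by
  simp only [rampParams, mem_sigma, mem_Ico, mem_product, mem_range]
  omega

theorem card_rampParams (hn : 0 < n) : #(rampParams n) = ∑ j ∈ range n, j ^ 2 := by
  simp only [rampParams, card_sigma, card_product, card_range]
  rw [sum_Ico_reflect (fun j => j * j) 1 le_self_add, range_eq_Ico, sum_eq_sum_Ico_succ_bot hn]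
  simp [sq]

theorem injOn_ramp :
    Set.InjOn (fun p : Σ _ : ℕ, ℕ × ℕ => ramp n p.1 p.2.1 p.2.2) (rampParams n) := by
  rintro ⟨d, a, s⟩ hp ⟨d', a', s'⟩ hq h
  simp only [mem_coe, mem_rampParams] at hp hq
  have hval (x : Fin n) := congrArg (fun f : Function.End (Fin n) => (f x : ℕ)) h
  have h₀ := hval ⟨0, by omega⟩
  have h₁ := hval ⟨n - 1, by omega⟩
  have h₂ := hval ⟨s, by omega⟩
  have h₃ := hval ⟨s + 1, by omega⟩
  simp only [ramp_val (by omega : a + d < n), ramp_val (by omega : a' + d' < n)] at h₀ h₁ h₂ h₃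
  simp only [Sigma.mk.injEq, Prod.mk.injEq, heq_eq_eq]
  omega

theorem ncard_constants (hn : 0 < n) : (constants n).ncard = n := by
  have : Nonempty (Fin n) := ⟨⟨0, hn⟩⟩
  exact (Set.ncard_range_of_injective Function.const_injective).trans (Nat.card_fin n)

theorem setOf_regular_monotone_eq (hn : 0 < n) :
    {α ∈ RegORCT n | Monotone α} =
      constants n ∪ (fun p : Σ _ : ℕ, ℕ × ℕ => ramp n p.1 p.2.1 p.2.2) '' rampParams n := by
  ext α
  constructor
  · rintro ⟨⟨⟨hα, -⟩, β, ⟨hβ, -⟩, hαβα⟩, hαm⟩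
    obtain ⟨d, a, s, had, hsd, rfl⟩ := exists_eq_ramp hn hα hαm hβ hαβα
    rcases Nat.eq_zero_or_pos d with rfl | hd
    · exact .inl ⟨⟨a, had⟩, (ramp_zero ⟨a, had⟩ s).symm⟩
    · exact .inr ⟨⟨d, a, s⟩, mem_rampParams.mpr ⟨hd, had, hsd⟩, rfl⟩
  · rintro (⟨v, rfl⟩ | ⟨⟨d, a, s⟩, hp, rfl⟩)
    · exact ⟨const_mem_RegORCT v, monotone_const⟩
    · obtain ⟨-, had, hsd⟩ := mem_rampParams.mp hp
      exact ⟨ramp_mem_RegORCT had hsd, monotone_ramp d a s⟩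

theorem ncard_regular_monotone (hn : 0 < n) :
    {α ∈ RegORCT n | Monotone α}.ncard = n + ∑ j ∈ range n, j ^ 2 := by
  have hdisj : Disjoint (constants n)
      ((fun p : Σ _ : ℕ, ℕ × ℕ => ramp n p.1 p.2.1 p.2.2) '' rampParams n) := by
    rw [Set.disjoint_left]
    rintro _ ⟨v, rfl⟩ ⟨⟨d, a, s⟩, hp, h⟩
    simp only [mem_coe, mem_rampParams] at hp
    have h₀ := congrArg (fun f : Function.End (Fin n) => (f ⟨0, hn⟩ : ℕ)) h
    have h₁ := congrArg (fun f : Function.End (Fin n) => (f ⟨n - 1, by omega⟩ : ℕ)) h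
    simp only [ramp_val (by omega : a + d < n), Function.const_apply] at h₀ h₁
    omega
  rw [setOf_regular_monotone_eq hn, Set.ncard_union_eq hdisj, ncard_constants hn,
    injOn_ramp.ncard_image, Set.ncard_coe_finset, card_rampParams hn]

theorem ncard_regular_antitone :
    {α ∈ RegORCT n | Antitone α}.ncard = {α ∈ RegORCT n | Monotone α}.ncard := by
  have hinv : Function.Involutive (· * reversal n) := fun α => by
    simp only [mul_assoc, reversal_mul_reversal, mul_one]
  have hpre : {α ∈ RegORCT n | Antitone α} =
      (· * reversal n) ⁻¹' {α ∈ RegORCT n | Monotone α} := by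
    ext α
    simp only [Set.mem_ofPred_eq, Set.mem_preimage, mul_reversal_mem_RegORCT_iff,
      monotone_mul_reversal_iff]
  rw [hpre, Set.ncard_preimage_of_injective_subset_range hinv.injective
    (hinv.surjective.range_eq ▸ Set.subset_univ _)]

theorem regular_monotone_inter_antitone (hn : 0 < n) :
    {α ∈ RegORCT n | Monotone α} ∩ {α ∈ RegORCT n | Antitone α} = constants n := by
  ext α
  constructor
  · rintro ⟨⟨-, hm⟩, -, ha⟩
    exact ⟨α ⟨0, hn⟩, funext fun x => le_antisymm (hm (Fin.mk_le_of_le_val x.val.zero_le))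
      (ha (Fin.mk_le_of_le_val x.val.zero_le))⟩
  · rintro ⟨v, rfl⟩
    exact ⟨⟨const_mem_RegORCT v, monotone_const⟩, const_mem_RegORCT v, antitone_const⟩

theorem ncard_RegORCT (hn : 0 < n) : (RegORCT n).ncard = n + 2 * ∑ j ∈ range n, j ^ 2 := by
  have hunion : RegORCT n = {α ∈ RegORCT n | Monotone α} ∪ {α ∈ RegORCT n | Antitone α} := by
    ext α
    refine ⟨fun h => ?_, fun h => h.elim (·.1) (·.1)⟩
    exact h.1.2.imp (⟨h, ·⟩) (⟨h, ·⟩)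
  have h := Set.ncard_union_add_ncard_inter {α ∈ RegORCT n | Monotone α}
    {α ∈ RegORCT n | Antitone α}
  rw [← hunion, regular_monotone_inter_antitone hn, ncard_constants hn, ncard_regular_antitone,
    ncard_regular_monotone hn] at h
  omega

end Counting

/-- `|Reg(ORCT_n)| = (n(n-1)(2n-1) + 6n)/3 - n`. -/
theorem stmt_2 (n : ℕ) (hn : 1 ≤ n) :
    (RegORCT n).ncard = (n * (n - 1) * (2 * n - 1) + 6 * n) / 3 - n := by
  have hcount := ncard_RegORCT hn
  have hsum := six_mul_sum_range_sq n
  omega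
end

section
/- For the finite chain [n] = {1,…,n} and each p with 1 ≤ p ≤ n, the number of idempotent full contractions of [n] that are order-preserving or order-reversing and have image of size exactly p equals n − p + 1. -/
def cl (n p i : ℕ) : Function.End (Fin n) :=
  fun x => ⟨min (max i x.val) (min (i + p - 1) (n - 1)), by have := x.isLt; omega⟩

lemma cl_val (n p i : ℕ) (x : Fin n) :
    ((cl n p i x : Fin n) : ℕ) = min (max i x.val) (min (i + p - 1) (n - 1)) := rfl

lemma abs_nat_sub (a b : ℕ) : |((a:ℤ) - b)| = ((max a b : ℕ) : ℤ) - min a b := by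
  rcases le_total a b with h|h
  · rw [abs_of_nonpos (by push_cast; omega)]; omega
  · rw [abs_of_nonneg (by push_cast; omega)]; omega

lemma cl_mem (n p i : ℕ) : cl n p i ∈ ORCT n := by
  refine ⟨fun x y => ?_, Or.inl fun x y h => ?_⟩
  · rw [cl_val, cl_val, abs_nat_sub, abs_nat_sub]
    have := x.isLt; have := y.isLt
    push_cast; omega
  · have h' : x.val ≤ y.val := h
    show min (max i x.val) _ ≤ min (max i y.val) _
    omega

lemma cl_idem (n p i : ℕ) : cl n p i * cl n p i = cl n p i := by
  funext x
  show cl n p i (cl n p i x) = cl n p i x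
  apply Fin.ext
  rw [cl_val, cl_val]
  omega

lemma range_ncard_interval {n : ℕ} (i q : ℕ) (h : i + q ≤ n) :
    (Set.range (fun k : Fin q => (⟨i + k.val, by have := k.isLt; omega⟩ : Fin n))).ncard = q := by
  rw [← Set.image_univ, Set.ncard_image_of_injective _ (fun a b hab => by
    apply Fin.ext
    have := congrArg Fin.val hab
    simpa using this), Set.ncard_univ]
  simp

lemma cl_imCard (n p i : ℕ) (hp : 1 ≤ p) (hi : i + p ≤ n) : imCard (cl n p i) = p := by
  have hr : Set.range (cl n p i)
      = Set.range (fun k : Fin p => (⟨i + k.val, by have := k.isLt; omega⟩ : Fin n)) := by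
    ext y
    constructor
    · rintro ⟨x, rfl⟩
      have hx := x.isLt
      refine ⟨⟨min (max i x.val) (min (i + p - 1) (n - 1)) - i, by omega⟩, ?_⟩
      apply Fin.ext
      simp [cl_val]
      omega
    · rintro ⟨k, rfl⟩
      have hk := k.isLt
      exact ⟨⟨i + k.val, by omega⟩, by apply Fin.ext; rw [cl_val]; simp; omega⟩
  rw [imCard, hr, range_ncard_interval i p hi]

lemma idem_fix {n : ℕ} (α : Function.End (Fin n)) (h : α * α = α) (x : Fin n) :
    α (α x) = α x := by
  conv_rhs => rw [← h]
  rfl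

lemma idem_mono {n : ℕ} (hn : 0 < n) (α : Function.End (Fin n)) (hα : α ∈ ORCT n)
    (h : α * α = α) : Monotone α := by
  have hn1 : n - 1 < n := by omega
  rcases hα.2 with hm | ha
  · exact hm
  · have hji : (α ⟨n-1, hn1⟩).val ≤ (α ⟨0, hn⟩).val :=
      ha (show (⟨0, hn⟩ : Fin n) ≤ ⟨n-1, hn1⟩ from by simp [Fin.le_def])
    have hfi : α (α ⟨0, hn⟩) = α ⟨0, hn⟩ := idem_fix α h _
    have hfj : α (α ⟨n-1, hn1⟩) = α ⟨n-1, hn1⟩ := idem_fix α h _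
    have hij : (α (α ⟨n-1, hn1⟩)).val ≥ (α (α ⟨0, hn⟩)).val :=
      Fin.le_def.mp (ha (Fin.le_def.mpr hji))
    rw [hfi, hfj] at hij
    have hconst : ∀ x, α x = α ⟨0, hn⟩ := by
      intro x
      apply Fin.ext
      have hx := x.isLt
      have h1 : (α x).val ≤ (α ⟨0, hn⟩).val := Fin.le_def.mp (ha (Fin.le_def.mpr (by simp)))
      have h2 : (α ⟨n-1, hn1⟩).val ≤ (α x).val :=
        Fin.le_def.mp (ha (Fin.le_def.mpr (by simp; omega)))
      omega
    intro a b _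
    rw [hconst a, hconst b]

lemma forward {n p : ℕ} (hp : 1 ≤ p) (hpn : p ≤ n) (α : Function.End (Fin n))
    (hα : α ∈ ORCT n) (h : α * α = α) (him : imCard α = p) :
    ∃ i ≤ n - p, α = cl n p i := by
  have hn : 0 < n := lt_of_lt_of_le hp hpn
  have hn1 : n - 1 < n := by omega
  have hm : Monotone α := idem_mono hn α hα h
  have hc := hα.1
  have hin : (α ⟨0, hn⟩).val < n := (α ⟨0, hn⟩).isLt
  have hjn : (α ⟨n-1, hn1⟩).val < n := (α ⟨n-1, hn1⟩).isLt
  set i := (α ⟨0, hn⟩).val with hi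
  set j := (α ⟨n-1, hn1⟩).val with hj
  have hij : i ≤ j := Fin.le_def.mp (hm (Fin.le_def.mpr (by simp)))
  have hfi : α ⟨i, hin⟩ = ⟨i, hin⟩ := idem_fix α h ⟨0, hn⟩
  have hfj : α ⟨j, hjn⟩ = ⟨j, hjn⟩ := idem_fix α h ⟨n-1, hn1⟩
  have hval : ∀ x : Fin n, (α x).val = min (max i x.val) j := by
    intro x
    have hx := x.isLt
    rcases le_or_gt x.val i with hxi | hxi
    · have h1 : (α x).val ≤ (α ⟨i, hin⟩).val := Fin.le_def.mp (hm (Fin.le_def.mpr hxi))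
      have h2 : (α ⟨0, hn⟩).val ≤ (α x).val := Fin.le_def.mp (hm (Fin.le_def.mpr (by simp)))
      rw [hfi] at h1
      simp only [Fin.val_mk] at h1
      omega
    · rcases le_or_gt x.val j with hxj | hxj
      · have h1 : (α ⟨i, hin⟩).val ≤ (α x).val := Fin.le_def.mp (hm (Fin.le_def.mpr (le_of_lt hxi)))
        have h2 : (α x).val ≤ (α ⟨j, hjn⟩).val := Fin.le_def.mp (hm (Fin.le_def.mpr hxj))
        rw [hfi] at h1; rw [hfj] at h2
        simp only [Fin.val_mk] at h1 h2
        have c1 := hc x ⟨i, hin⟩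
        have c2 := hc x ⟨j, hjn⟩
        rw [hfi] at c1; rw [hfj] at c2
        rw [abs_nat_sub, abs_nat_sub] at c1 c2
        simp only [Fin.val_mk] at c1 c2
        have c1' : max (α x).val i - min (α x).val i ≤ max x.val i - min x.val i := by
          have := c1; push_cast at this; omega
        have c2' : max (α x).val j - min (α x).val j ≤ max x.val j - min x.val j := by
          have := c2; push_cast at this; omega
        omega
      · have h1 : (α ⟨j, hjn⟩).val ≤ (α x).val := Fin.le_def.mp (hm (Fin.le_def.mpr (le_of_lt hxj)))
        have h2 : (α x).val ≤ (α ⟨n-1, hn1⟩).val :=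
          Fin.le_def.mp (hm (Fin.le_def.mpr (by simp; omega)))
        rw [hfj] at h1
        simp only [Fin.val_mk] at h1
        omega
  have hrange : Set.range α
      = Set.range (fun k : Fin (j - i + 1) => (⟨i + k.val, by have := k.isLt; omega⟩ : Fin n)) := by
    ext y
    constructor
    · rintro ⟨x, rfl⟩
      have hx := x.isLt
      have hv := hval x
      refine ⟨⟨(α x).val - i, by omega⟩, ?_⟩
      apply Fin.ext
      simp
      omega
    · rintro ⟨k, rfl⟩
      have hk := k.isLt
      refine ⟨⟨i + k.val, by omega⟩, ?_⟩
      apply Fin.ext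
      rw [hval]
      simp
      omega
  have hpji : p = j - i + 1 := by
    rw [← him, imCard, hrange, range_ncard_interval i (j - i + 1) (by omega)]
  refine ⟨i, by omega, ?_⟩
  funext x
  apply Fin.ext
  rw [hval, cl_val]
  omega

/-- the number of idempotents of `ORCT_n` with image of size exactly `p`
is `n - p + 1`, for each `1 ≤ p ≤ n`. -/
theorem stmt_3 (n p : ℕ) (hp1 : 1 ≤ p) (hpn : p ≤ n) :
    ({α : Function.End (Fin n) | α ∈ ORCT n ∧ α * α = α ∧ imCard α = p}).ncard
      = n - p + 1 := by
  have hset : {α : Function.End (Fin n) | α ∈ ORCT n ∧ α * α = α ∧ imCard α = p}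
      = (fun i => cl n p i) '' (Set.Iic (n - p)) := by
    ext α
    constructor
    · rintro ⟨hα, hid, him⟩
      obtain ⟨i, hi, rfl⟩ := forward hp1 hpn α hα hid him
      exact ⟨i, hi, rfl⟩
    · rintro ⟨i, hi, rfl⟩
      have hi' : i + p ≤ n := by
        simp only [Set.mem_Iic] at hi; omega
      exact ⟨cl_mem n p i, cl_idem n p i, cl_imCard n p i hp1 hi'⟩
  rw [hset, Set.ncard_image_of_injOn, ← Finset.coe_Iic, Set.ncard_coe_finset, Nat.card_Iic]
  intro a ha b hb hab
  simp only [Set.mem_Iic] at ha hb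
  have := congrArg (fun f : Function.End (Fin n) => (f ⟨0, by omega⟩).val) hab
  simp only [cl_val] at this
  omega
end

section
/- For every n ≥ 1, the number of idempotent elements of the semigroup ORCT_n of order-preserving or order-reversing full contractions of the chain [n] is |E(ORCT_n)| = n(n+1)/2. -/
lemma val_min {n : ℕ} (a b : Fin n) : (min a b).val = min a.val b.val := by
  rw [min_def, min_def]; split_ifs <;> first | rfl | (exfalso; rw [Fin.le_def] at *; omega)

lemma val_max {n : ℕ} (a b : Fin n) : (max a b).val = max a.val b.val := by
  rw [max_def, max_def]; split_ifs <;> first | rfl | (exfalso; rw [Fin.le_def] at *; omega)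

/-- symmetric clamp -/
def clampF {n : ℕ} (a b : Fin n) : Function.End (Fin n) :=
  fun x => min (max a b) (max (min a b) x)

lemma clampF_symm {n : ℕ} (a b : Fin n) : clampF a b = clampF b a := by
  funext x; simp [clampF, min_comm a b, max_comm a b]

noncomputable def eSym (n : ℕ) : Sym2 (Fin n) → Function.End (Fin n) :=
  Sym2.lift ⟨clampF, clampF_symm⟩

lemma val_clampF {n : ℕ} (a b x : Fin n) :
    (clampF a b x).val = min (max a.val b.val) (max (min a.val b.val) x.val) := by
  simp [clampF, val_min, val_max]

lemma intAbsClamp (a b x y : ℤ) :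
    |min b (max a x) - min b (max a y)| ≤ |x - y| := by
  have h1 := le_abs_self (x - y)
  have h2 := neg_abs_le (x - y)
  rw [abs_sub_le_iff]; omega

/-- `|E(ORCT_n)| = n(n+1)/2`. -/
theorem stmt_4 (n : ℕ) (hn : 1 ≤ n) :
    ({α : Function.End (Fin n) | α ∈ ORCT n ∧ α * α = α}).ncard = n * (n + 1) / 2 := by
  have hinj : Function.Injective (eSym n) := by
    intro s t h
    induction s using Sym2.inductionOn with | hf p q =>
    induction t using Sym2.inductionOn with | hf r u =>
    have h0 : (eSym n s(p, q)) ⟨0, hn⟩ = (eSym n s(r, u)) ⟨0, hn⟩ := by rw [h]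
    have hl : (eSym n s(p, q)) ⟨n - 1, by omega⟩ = (eSym n s(r, u)) ⟨n - 1, by omega⟩ := by rw [h]
    have e0 : ∀ c d : Fin n, ((eSym n s(c, d)) ⟨0, hn⟩).val = min c.val d.val := by
      intro c d
      show (clampF c d _).val = _
      rw [val_clampF]
      have hc := c.isLt; have hd := d.isLt
      simp only [Fin.val_mk]; omega
    have el : ∀ c d : Fin n, ((eSym n s(c, d)) ⟨n - 1, by omega⟩).val = max c.val d.val := by
      intro c d
      show (clampF c d _).val = _
      rw [val_clampF]
      have hc := c.isLt; have hd := d.isLt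
      simp only [Fin.val_mk]; omega
    have h0' := congrArg Fin.val h0
    have hl' := congrArg Fin.val hl
    rw [e0, e0] at h0'; rw [el, el] at hl'
    rw [Sym2.eq_iff]
    have hpq := p.isLt
    have : (p.val = r.val ∧ q.val = u.val) ∨ (p.val = u.val ∧ q.val = r.val) := by omega
    rcases this with ⟨h1, h2⟩ | ⟨h1, h2⟩
    · exact Or.inl ⟨Fin.ext h1, Fin.ext h2⟩
    · exact Or.inr ⟨Fin.ext h1, Fin.ext h2⟩
  have hset : {α : Function.End (Fin n) | α ∈ ORCT n ∧ α * α = α} = Set.range (eSym n) := by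
    ext α
    simp only [Set.mem_setOf_eq, Set.mem_range]
    constructor
    · rintro ⟨⟨hc, hmono⟩, hid⟩
      have hfix : ∀ x, α (α x) = α x := fun x => congrFun hid x
      rcases hmono with hm | ha
      · -- order-preserving: α = clamp (α 0) (α last)
        set a := α ⟨0, hn⟩ with hadef
        set b := α ⟨n - 1, by omega⟩ with hbdef
        have hab : a ≤ b := hm (by rw [Fin.le_def]; simp only [Fin.val_mk]; omega)
        refine ⟨s(a, b), ?_⟩
        show clampF a b = α
        funext x
        have haf : α a = a := hfix _
        have hbf : α b = b := hfix _
        have hxa : a ≤ α x := hm (by rw [Fin.le_def]; simp)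
        have hxb : α x ≤ b := hm (by rw [Fin.le_def]; simp only [Fin.val_mk]; omega; try omega)
        apply Fin.ext
        rw [val_clampF]
        rw [Fin.le_def] at hab hxa hxb
        rcases le_or_gt x.val a.val with h1 | h1
        · -- α x = a
          have : α x ≤ α a := hm (by rw [Fin.le_def]; omega)
          rw [haf, Fin.le_def] at this
          omega
        · rcases le_or_gt x.val b.val with h2 | h2
          · -- α x = x
            have c1 := hc x a
            have c2 := hc x b
            rw [haf] at c1; rw [hbf] at c2
            rw [abs_sub_le_iff] at c1 c2
            have d1 : |((x : ℕ) : ℤ) - ((a : ℕ) : ℤ)| = (x : ℕ) - (a : ℕ) := by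
              rw [abs_of_nonneg]; omega
            have d2 : |((x : ℕ) : ℤ) - ((b : ℕ) : ℤ)| = (b : ℕ) - (x : ℕ) := by
              rw [abs_of_nonpos] <;> omega
            rw [d1] at c1; rw [d2] at c2
            omega
          · -- α x = b
            have : α b ≤ α x := hm (by rw [Fin.le_def]; omega)
            rw [hbf, Fin.le_def] at this
            omega
      · -- order-reversing: α is constant
        have hconst : ∀ x y : Fin n, α x = α y := by
          intro x y
          rcases le_total (α x) (α y) with h | h
          · have := ha h; rw [hfix, hfix] at this; exact le_antisymm h this
          · have := ha h; rw [hfix, hfix] at this; exact (le_antisymm h this).symm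
        set v := α ⟨0, hn⟩ with hv
        refine ⟨s(v, v), ?_⟩
        show clampF v v = α
        funext x
        rw [← hconst ⟨0, hn⟩ x, ← hv]
        apply Fin.ext
        rw [val_clampF]; omega
    · rintro ⟨s, rfl⟩
      induction s using Sym2.inductionOn with | hf p q =>
      show clampF p q ∈ ORCT n ∧ clampF p q * clampF p q = clampF p q
      refine ⟨⟨?_, Or.inl ?_⟩, ?_⟩
      · intro x y
        have hx := val_clampF p q x
        have hy := val_clampF p q y
        show |((clampF p q x : ℕ) : ℤ) - ((clampF p q y : ℕ) : ℤ)| ≤ _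
        rw [hx, hy]
        push_cast
        exact intAbsClamp _ _ _ _
      · intro x y hxy
        rw [Fin.le_def] at hxy ⊢
        rw [val_clampF, val_clampF]
        omega
      · funext x
        show clampF p q (clampF p q x) = clampF p q x
        apply Fin.ext
        rw [val_clampF, val_clampF]
        omega
  rw [hset, ← Set.image_univ, Set.ncard_image_of_injective _ hinj, Set.ncard_univ,
    Nat.card_eq_fintype_card, Sym2.card, Fintype.card_fin, Nat.choose_two_right]
  rw [Nat.add_sub_cancel, Nat.mul_comm]
end

section
/- Every idempotent element of the semigroup ORCT_n of order-preserving or order-reversing full contractions of the chain [n] is order-preserving; consequently the idempotents of OCT_n and of ORCT_n coincide and |E(OCT_n)| = n(n+1)/2. -/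
/-- the clamp map `x ↦ max a (min b x)` as an endomorphism -/
def clamp2 {n : ℕ} (p : Fin n × Fin n) : Function.End (Fin n) :=
  fun x => max p.1 (min p.2 x)

lemma clamp2_mem {n : ℕ} (p : Fin n × Fin n) (hab : p.1 ≤ p.2) :
    clamp2 p ∈ OCT n ∧ clamp2 p * clamp2 p = clamp2 p := by
  obtain ⟨a, b⟩ := p
  simp only [clamp2] at *
  refine ⟨⟨?_, ?_⟩, ?_⟩
  · intro x y
    show |((max a.val (min b.val x.val) : ℕ) : ℤ) - ((max a.val (min b.val y.val) : ℕ) : ℤ)| ≤ _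
    push_cast
    rcases le_total (x.val : ℤ) (y.val : ℤ) with h | h
    · rw [abs_of_nonpos (by omega), abs_of_nonpos (by omega)]; omega
    · rw [abs_of_nonneg (by omega), abs_of_nonneg (by omega)]; omega
  · intro x y h
    exact max_le_max le_rfl (min_le_min le_rfl h)
  · funext x
    show max a (min b (max a (min b x))) = max a (min b x)
    apply Fin.ext
    show max a.val (min b.val (max a.val (min b.val x.val))) = max a.val (min b.val x.val)
    have : a.val ≤ b.val := hab
    omega

lemma idem_eq_clamp2 {n : ℕ} (hn : 1 ≤ n) (α : Function.End (Fin n))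
    (hα : α ∈ OCT n) (hid : α * α = α) :
    α = clamp2 (α ⟨0, hn⟩, α ⟨n - 1, by omega⟩) := by
  obtain ⟨hc, hm⟩ := hα
  have hfix : ∀ x, α (α x) = α x := fun x => congrFun hid x
  set z : Fin n := ⟨0, hn⟩ with hz
  set t : Fin n := ⟨n - 1, by omega⟩ with ht
  set a := α z with ha
  set b := α t with hb
  have hab : a ≤ b := hm (by show z.val ≤ t.val; simp [hz, ht])
  have hfa : α a = a := hfix z
  have hfb : α b = b := hfix t
  funext x
  have hza : z ≤ x := by show z.val ≤ x.val; simp [hz]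
  have hxt : x ≤ t := by show x.val ≤ t.val; simp [ht]; omega
  have hax : a ≤ α x := hm hza
  have hxb : α x ≤ b := hm hxt
  show α x = max a (min b x)
  rcases le_total x a with h | h
  · -- α x = a
    have h1 : α x ≤ a := by rw [← hfa]; exact hm h
    have : α x = a := le_antisymm h1 hax
    rw [this]
    apply Fin.ext
    show a.val = max a.val (min b.val x.val)
    have h' : x.val ≤ a.val := h
    have h'' : a.val ≤ b.val := hab
    omega
  rcases le_total b x with h2 | h2
  · -- α x = b
    have h1 : b ≤ α x := by rw [← hfb]; exact hm h2
    have : α x = b := le_antisymm hxb h1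
    rw [this]
    apply Fin.ext
    show b.val = max a.val (min b.val x.val)
    have h' : b.val ≤ x.val := h2
    have h'' : a.val ≤ b.val := hab
    omega
  · -- a ≤ x ≤ b : α x = x
    have c1 := hc x a
    have c2 := hc x b
    rw [hfa] at c1
    rw [hfb] at c2
    have h' : a.val ≤ x.val := h
    have h2' : x.val ≤ b.val := h2
    have hax' : a.val ≤ (α x).val := hax
    have hxb' : (α x).val ≤ b.val := hxb
    rw [abs_of_nonneg (by omega), abs_of_nonneg (by omega)] at c1
    rw [abs_of_nonpos (by omega), abs_of_nonpos (by omega)] at c2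
    have : (α x).val = x.val := by omega
    apply Fin.ext
    show (α x).val = max a.val (min b.val x.val)
    omega

/-- every idempotent of `ORCT_n` is order-preserving, hence the idempotents
of `OCT_n` and of `ORCT_n` coincide, and `|E(OCT_n)| = n(n+1)/2`. -/
theorem stmt_5 (n : ℕ) (hn : 1 ≤ n) :
    (∀ α ∈ ORCT n, α * α = α → Monotone α) ∧
    ({α : Function.End (Fin n) | α ∈ OCT n ∧ α * α = α}
      = {α : Function.End (Fin n) | α ∈ ORCT n ∧ α * α = α}) ∧
    ({α : Function.End (Fin n) | α ∈ OCT n ∧ α * α = α}).ncard = n * (n + 1) / 2 := by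
  have key : ∀ α ∈ ORCT n, α * α = α → Monotone α := by
    intro α hα hid
    rcases hα.2 with h | h
    · exact h
    · -- antitone idempotent ⇒ constant
      have hfix : ∀ x, α (α x) = α x := fun x => congrFun hid x
      have hconst : ∀ x y : Fin n, α x = α y := by
        intro x y
        rcases le_total (α x) (α y) with hle | hle
        · have := h hle  -- α (α y) ≤ α (α x)
          rw [hfix, hfix] at this
          exact le_antisymm hle this
        · have := h hle
          rw [hfix, hfix] at this
          exact (le_antisymm hle this).symm
      intro x y _
      exact le_of_eq (hconst x y)
  refine ⟨key, ?_, ?_⟩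
  · ext α
    simp only [Set.mem_setOf_eq]
    constructor
    · rintro ⟨⟨hc, hm⟩, hid⟩
      exact ⟨⟨hc, Or.inl hm⟩, hid⟩
    · rintro ⟨hα, hid⟩
      exact ⟨⟨hα.1, key α hα hid⟩, hid⟩
  · -- counting
    have himg : {α : Function.End (Fin n) | α ∈ OCT n ∧ α * α = α}
        = clamp2 '' {p : Fin n × Fin n | p.1 ≤ p.2} := by
      ext α
      simp only [Set.mem_setOf_eq, Set.mem_image]
      constructor
      · intro ⟨hα, hid⟩
        refine ⟨(α ⟨0, hn⟩, α ⟨n - 1, by omega⟩), ?_, (idem_eq_clamp2 hn α hα hid).symm⟩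
        exact hα.2 (show (0:ℕ) ≤ n - 1 by omega)
      · rintro ⟨p, hp, rfl⟩
        exact clamp2_mem p hp
    have hinj : Set.InjOn clamp2 {p : Fin n × Fin n | p.1 ≤ p.2} := by
      rintro ⟨a, b⟩ hab ⟨a', b'⟩ hab' heq
      have hab : a ≤ b := hab
      have hab' : a' ≤ b' := hab'
      have e1 := congrFun heq ⟨0, hn⟩
      have e2 := congrFun heq ⟨n - 1, by omega⟩
      have ea : a = a' := by
        apply Fin.ext
        have h0 := congrArg Fin.val e1
        have : max a.val (min b.val 0) = max a'.val (min b'.val 0) := h0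
        show a.val = a'.val
        omega
      have eb : b = b' := by
        apply Fin.ext
        have := congrArg Fin.val e2
        have hb : b.val ≤ n - 1 := by omega
        have hb' : b'.val ≤ n - 1 := by omega
        have hab2 : a.val ≤ b.val := hab
        have hab2' : a'.val ≤ b'.val := hab'
        show b.val = b'.val
        have : max a.val (min b.val (n-1)) = max a'.val (min b'.val (n-1)) := this
        omega
      rw [ea, eb]
    rw [himg, Set.ncard_image_of_injOn hinj]
    have : {p : Fin n × Fin n | p.1 ≤ p.2}.ncard
        = Fintype.card {p : Fin n × Fin n // p.1 ≤ p.2} := by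
      rw [← Nat.card_coe_set_eq, Nat.card_eq_fintype_card]
      exact Fintype.card_congr (Equiv.refl _)
    rw [this, ← Fintype.card_congr (Sym2.sortEquiv (α := Fin n)), Sym2.card]
    rw [Fintype.card_fin, Nat.choose_two_right]
    simp [Nat.mul_comm]
end

section
/- Fix n ≥ 1 and 1 ≤ p ≤ n, and let K_p = {α ∈ Reg(OCT_n) : |Im α| = p}. Let R_η = {α ∈ K_p : Im α = {1,…,p}} and let L_δ = {α ∈ K_p : the kernel classes of α are {1}, {2}, …, {p−1}, {p, p+1, …, n}}. Then the subsemigroup of Reg(OCT_n) generated by R_η ∪ L_δ contains K_p (indeed every element of K_p is a product of an element of R_η followed by an element of L_δ). -/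
/-- `K_p`: the elements of `Reg(OCT_n)` of rank exactly `p`. -/
def Kp (n p : ℕ) : Set (Function.End (Fin n)) :=
  {α | α ∈ RegOCT n ∧ imCard α = p}

/-- `R_η`: the elements of `K_p` whose image is `{1, …, p}` (i.e. `{0, …, p-1}` in `Fin n`). -/
def Reta (n p : ℕ) : Set (Function.End (Fin n)) :=
  {α | α ∈ Kp n p ∧ Set.range α = {x : Fin n | (x : ℕ) < p}}

/-- `L_δ`: the elements of `K_p` whose kernel classes are `{1}, …, {p-1}, {p, …, n}`
(in `Fin n`: singletons `{0}, …, {p-2}` together with the block of indices `≥ p - 1`). -/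
def Ldelta (n p : ℕ) : Set (Function.End (Fin n)) :=
  {α | α ∈ Kp n p ∧
    ∀ x y : Fin n, α x = α y ↔ (x = y ∨ (p - 1 ≤ (x : ℕ) ∧ p - 1 ≤ (y : ℕ)))}

/- ===================== auxiliary material ===================== -/

lemma abs_helper {A B C D : ℤ} (h1 : A - B ≤ C - D ∨ A - B ≤ D - C)
    (h2 : B - A ≤ C - D ∨ B - A ≤ D - C) : |A - B| ≤ |C - D| := by
  rw [abs_sub_le_iff]
  have hC : C - D ≤ |C - D| := le_abs_self _
  have hD : D - C ≤ |C - D| := by rw [abs_sub_comm]; exact le_abs_self _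
  constructor
  · rcases h1 with h | h
    exacts [h.trans hC, h.trans hD]
  · rcases h2 with h | h
    exacts [h.trans hC, h.trans hD]

lemma contraction_nat {n : ℕ} {α : Function.End (Fin n)} (hc : IsContraction α) (x y : Fin n) :
    (α x).val ≤ (α y).val + (x.val - y.val) + (y.val - x.val) ∧
    (α y).val ≤ (α x).val + (x.val - y.val) + (y.val - x.val) := by
  have h2 := hc x y
  rcases abs_cases (((α x : ℕ) : ℤ) - ((α y : ℕ) : ℤ)) with ⟨e1, _⟩ | ⟨e1, _⟩ <;>
    rcases abs_cases (((x : ℕ) : ℤ) - ((y : ℕ) : ℤ)) with ⟨e2, _⟩ | ⟨e2, _⟩ <;>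
    rw [e1, e2] at h2 <;> omega

lemma oct_mul {n : ℕ} {f g : Function.End (Fin n)} (hf : f ∈ OCT n) (hg : g ∈ OCT n) :
    f * g ∈ OCT n := by
  refine ⟨fun x y => ?_, hf.2.comp hg.2⟩
  exact le_trans (hf.1 (g x) (g y)) (hg.1 x y)

/-- shift down by `a` (truncated subtraction). -/
def shiftDown (n a : ℕ) : Function.End (Fin n) :=
  fun x => ⟨x.val - a, lt_of_le_of_lt (Nat.sub_le _ _) x.2⟩

lemma shiftDown_mem (n a : ℕ) : shiftDown n a ∈ OCT n := by
  constructor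
  · intro x y
    exact abs_helper (by simp only [shiftDown]; omega) (by simp only [shiftDown]; omega)
  · intro x y h
    simp only [Fin.le_def] at h ⊢
    exact Nat.sub_le_sub_right h a

/-- shift up by `a` (truncated at `n-1`). -/
def shiftUp (n a : ℕ) (hn : 0 < n) : Function.End (Fin n) :=
  fun x => ⟨min (x.val + a) (n - 1), by omega⟩

lemma shiftUp_mem (n a : ℕ) (hn : 0 < n) : shiftUp n a hn ∈ OCT n := by
  constructor
  · intro x y
    exact abs_helper (by simp only [shiftUp]; omega) (by simp only [shiftUp]; omega)
  · intro x y h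
    simp only [Fin.le_def] at h ⊢
    simp only [shiftDown, shiftUp]
    omega

/-- the map `y ↦ a + min y (p-1)`. -/
def gammaMap (n p a : ℕ) (hb : a + (p - 1) < n) : Function.End (Fin n) :=
  fun y => ⟨a + min y.val (p - 1), by have := min_le_right y.val (p - 1); omega⟩

lemma gammaMap_mem (n p a : ℕ) (hb : a + (p - 1) < n) : gammaMap n p a hb ∈ OCT n := by
  constructor
  · intro x y
    exact abs_helper (by simp only [gammaMap]; omega) (by simp only [gammaMap]; omega)
  · intro x y h
    simp only [Fin.le_def] at h ⊢
    simp only [gammaMap]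
    omega

/-- discrete intermediate value theorem for monotone contractions. -/
lemma ivt {n : ℕ} {α : Function.End (Fin n)} (hc : IsContraction α) (hm : Monotone α) :
    ∀ (m : ℕ) (hmn : m < n) (c : Fin n),
      α ⟨0, lt_of_le_of_lt (Nat.zero_le m) hmn⟩ ≤ c → c ≤ α ⟨m, hmn⟩ → ∃ x, α x = c := by
  intro m
  induction m with
  | zero =>
    intro hmn c h1 h2
    exact ⟨⟨0, hmn⟩, le_antisymm h1 h2⟩
  | succ k ih =>
    intro hmn c h1 h2
    have hk : k < n := lt_trans (Nat.lt_succ_self k) hmn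
    by_cases h : c ≤ α ⟨k, hk⟩
    · exact ih hk c h1 h
    · push_neg at h
      have hadj := contraction_nat hc ⟨k + 1, hmn⟩ ⟨k, hk⟩
      simp only [Fin.val_mk] at hadj
      have hlt : (α ⟨k, hk⟩).val < c.val := h
      have hle : c.val ≤ (α ⟨k + 1, hmn⟩).val := h2
      exact ⟨⟨k + 1, hmn⟩, Fin.ext (by omega)⟩

/-- `K_p` lies in the subsemigroup generated by `R_η ∪ L_δ`; indeed every
element of `K_p` is a product of an element of `R_η` followed by an element of `L_δ`. -/
theorem stmt_6 (n p : ℕ) (hn : 1 ≤ n) (hp1 : 1 ≤ p) (hpn : p ≤ n) :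
    ∀ α ∈ Kp n p,
      α ∈ Subsemigroup.closure (Reta n p ∪ Ldelta n p) ∧
      ∃ β ∈ Reta n p, ∃ γ ∈ Ldelta n p, α = γ * β := by
  intro α hα
  obtain ⟨⟨⟨hcα, hmα⟩, w, hwOCT, hw⟩, hrank⟩ := hα
  have hn0 : 0 < n := hn
  have hlastlt : n - 1 < n := by omega
  set f0 : Fin n := ⟨0, hn0⟩ with hf0
  set lastF : Fin n := ⟨n - 1, hlastlt⟩ with hlastF
  set a : ℕ := (α f0).val with ha
  set b : ℕ := (α lastF).val with hbdef
  -- every value of α is between a and b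
  have hbound : ∀ x : Fin n, a ≤ (α x).val ∧ (α x).val ≤ b := by
    intro x
    constructor
    · exact hmα (show f0 ≤ x from by simp [Fin.le_def, hf0])
    · exact hmα (show x ≤ lastF from by simp only [Fin.le_def, hlastF]; omega)
  -- every value between a and b is attained
  have hsurj : ∀ c : Fin n, a ≤ c.val → c.val ≤ b → ∃ x, α x = c := by
    intro c h1 h2
    exact ivt hcα hmα (n - 1) hlastlt c h1 h2
  -- the range of α is the interval [a, b]
  have hrange : Set.range α = Set.Icc (α f0) (α lastF) := by
    ext c
    simp only [Set.mem_range, Set.mem_Icc]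
    constructor
    · rintro ⟨y, rfl⟩
      exact ⟨Fin.le_def.mpr (hbound y).1, Fin.le_def.mpr (hbound y).2⟩
    · rintro ⟨h1, h2⟩
      exact hsurj c (Fin.le_def.mp h1) (Fin.le_def.mp h2)
  have hcard : b + 1 - a = p := by
    have : imCard α = (Set.Icc (α f0) (α lastF)).ncard := by rw [imCard, hrange]
    rw [hrank] at this
    rw [← Finset.coe_Icc, Set.ncard_coe_finset, Fin.card_Icc] at this
    omega
  have hab : a ≤ b := (hbound lastF).1
  have hb : b = a + (p - 1) := by omega
  have hbn : a + (p - 1) < n := by rw [← hb]; exact (α lastF).2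
  -- the two factors
  have hβOCT : shiftDown n a * α ∈ OCT n := oct_mul (shiftDown_mem n a) ⟨hcα, hmα⟩
  have hγOCT : gammaMap n p a hbn ∈ OCT n := gammaMap_mem n p a hbn
  -- regularity of β
  have hβreg : ∃ w' ∈ OCT n,
      (shiftDown n a * α) * w' * (shiftDown n a * α) = shiftDown n a * α := by
    refine ⟨w * shiftUp n a hn0, oct_mul hwOCT (shiftUp_mem n a hn0), ?_⟩
    funext x
    have hup : shiftUp n a hn0 (shiftDown n a (α x)) = α x := by
      apply Fin.ext
      show min ((α x).val - a + a) (n - 1) = (α x).val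
      have h1 := (hbound x).1
      have h2 := (α x).2
      omega
    show shiftDown n a (α (w (shiftUp n a hn0 (shiftDown n a (α x))))) = shiftDown n a (α x)
    rw [hup]
    have := congrFun hw x
    show shiftDown n a ((α * w * α) x) = shiftDown n a (α x)
    rw [this]
  -- the range of β
  have hrangeβ : Set.range (shiftDown n a * α) = {x : Fin n | (x : ℕ) < p} := by
    ext x
    simp only [Set.mem_range, Set.mem_setOf_eq]
    constructor
    · rintro ⟨y, rfl⟩
      show (α y).val - a < p
      have := hbound y
      omega
    · intro hx
      obtain ⟨y, hy⟩ := hsurj ⟨a + x.val, by omega⟩ (by simp) (by simp; omega)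
      refine ⟨y, ?_⟩
      apply Fin.ext
      show (α y).val - a = x.val
      rw [hy]
      simp
  -- rank of β
  have himβ : imCard (shiftDown n a * α) = p := by
    rw [imCard, hrangeβ]
    have : {x : Fin n | (x : ℕ) < p} = Set.Iic (⟨p - 1, by omega⟩ : Fin n) := by
      ext x
      simp only [Set.mem_setOf_eq, Set.mem_Iic, Fin.le_def]
      omega
    rw [this, ← Finset.coe_Iic, Set.ncard_coe_finset, Fin.card_Iic]
    simp only [Fin.val_mk]
    omega
  have hβmem : shiftDown n a * α ∈ Reta n p := ⟨⟨⟨hβOCT, hβreg⟩, himβ⟩, hrangeβ⟩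
  -- regularity of γ
  have hγreg : ∃ w' ∈ OCT n,
      gammaMap n p a hbn * w' * gammaMap n p a hbn = gammaMap n p a hbn := by
    refine ⟨shiftDown n a, shiftDown_mem n a, ?_⟩
    funext y
    apply Fin.ext
    show a + min (a + min y.val (p - 1) - a) (p - 1) = a + min y.val (p - 1)
    omega
  -- range of γ equals range of α
  have hrangeγ : Set.range (gammaMap n p a hbn) = Set.range α := by
    ext c
    rw [hrange]
    simp only [Set.mem_range, Set.mem_Icc, Fin.le_def]
    constructor
    · rintro ⟨y, rfl⟩
      show a ≤ a + min y.val (p - 1) ∧ a + min y.val (p - 1) ≤ b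
      omega
    · rintro ⟨h1, h2⟩
      refine ⟨⟨c.val - a, lt_of_le_of_lt (Nat.sub_le _ _) c.2⟩, ?_⟩
      apply Fin.ext
      show a + min (c.val - a) (p - 1) = c.val
      omega
  have himγ : imCard (gammaMap n p a hbn) = p := by
    rw [imCard, hrangeγ]
    exact hrank
  -- kernel classes of γ
  have hker : ∀ x y : Fin n, gammaMap n p a hbn x = gammaMap n p a hbn y ↔
      (x = y ∨ (p - 1 ≤ (x : ℕ) ∧ p - 1 ≤ (y : ℕ))) := by
    intro x y
    constructor
    · intro h
      have hval : a + min x.val (p - 1) = a + min y.val (p - 1) := congrArg Fin.val h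
      by_cases hx : p - 1 ≤ x.val
      · exact Or.inr ⟨hx, by omega⟩
      · exact Or.inl (Fin.ext (by omega))
    · rintro (rfl | ⟨h1, h2⟩)
      · rfl
      · apply Fin.ext
        show a + min x.val (p - 1) = a + min y.val (p - 1)
        omega
  have hγmem : gammaMap n p a hbn ∈ Ldelta n p := ⟨⟨⟨hγOCT, hγreg⟩, himγ⟩, hker⟩
  -- the decomposition
  have hdecomp : α = gammaMap n p a hbn * (shiftDown n a * α) := by
    funext x
    apply Fin.ext
    show (α x).val = a + min ((α x).val - a) (p - 1)
    have := hbound x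
    omega
  refine ⟨?_, shiftDown n a * α, hβmem, gammaMap n p a hbn, hγmem, hdecomp⟩
  rw [hdecomp]
  exact Subsemigroup.mul_mem _ (Subsemigroup.subset_closure (Or.inr hγmem))
    (Subsemigroup.subset_closure (Or.inl hβmem))
end

section
/- Let n ≥ 4 and 1 ≤ p ≤ n − 2, and let K_p = {α ∈ Reg(OCT_n) : |Im α| = p}. Then K_p is contained in the subsemigroup generated by K_{p+1}; that is, every regular order-preserving full contraction of [n] of rank p is a product of regular order-preserving full contractions of rank p + 1. -/
/-! ### Auxiliary development -/

/-- The canonical regular order-preserving contraction of rank `q+1`: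
`x ↦ a + min q (x - s)`. -/
def Fct (n a s q : ℕ) (h : a + q < n) : Function.End (Fin n) :=
  fun x => ⟨a + min q (x.val - s), by have := Nat.min_le_left q (x.val - s); omega⟩

lemma Fct_apply {n : ℕ} (a s q : ℕ) (h : a + q < n) (x : Fin n) :
    ((Fct n a s q h x : Fin n) : ℕ) = a + min q (x.val - s) := rfl

lemma isContraction_of_lip {n : ℕ} (f : Function.End (Fin n))
    (h : ∀ x y : Fin n, (x : ℕ) ≤ y → (f x : ℕ) ≤ f y ∧ (f y : ℕ) ≤ f x + ((y : ℕ) - x)) :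
    IsContraction f := by
  have key : ∀ x y : Fin n, (x : ℕ) ≤ (y : ℕ) →
      |((f x : ℕ) : ℤ) - ((f y : ℕ) : ℤ)| ≤ |((x : ℕ) : ℤ) - ((y : ℕ) : ℤ)| := by
    intro x y hxy
    obtain ⟨h1, h2⟩ := h x y hxy
    have e1 : |((f x : ℕ) : ℤ) - ((f y : ℕ) : ℤ)| = ((f y : ℕ) : ℤ) - ((f x : ℕ) : ℤ) := by
      rw [abs_sub_comm, abs_of_nonneg]; omega
    have e2 : |((x : ℕ) : ℤ) - ((y : ℕ) : ℤ)| = ((y : ℕ) : ℤ) - ((x : ℕ) : ℤ) := by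
      rw [abs_sub_comm, abs_of_nonneg]; omega
    rw [e1, e2]; omega
  intro x y
  rcases le_total (x : ℕ) (y : ℕ) with h' | h'
  · exact key x y h'
  · rw [abs_sub_comm ((x : ℕ) : ℤ), abs_sub_comm ((f x : ℕ) : ℤ)]
    exact key y x h'

lemma Fct_mem_OCT {n : ℕ} (a s q : ℕ) (h : a + q < n) : Fct n a s q h ∈ OCT n := by
  constructor
  · apply isContraction_of_lip
    intro x y hxy
    constructor
    · show a + min q (x.val - s) ≤ a + min q (y.val - s)
      omega
    · show a + min q (y.val - s) ≤ a + min q (x.val - s) + ((y : ℕ) - x)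
      omega
  · intro x y hxy
    have hxy' : (x : ℕ) ≤ y := hxy
    show Fct n a s q h x ≤ Fct n a s q h y
    rw [Fin.le_def]
    show a + min q (x.val - s) ≤ a + min q (y.val - s)
    omega

lemma Fct_mem_Kp {n : ℕ} (a s q : ℕ) (h1 : a + q < n) (h2 : s + q < n) :
    Fct n a s q h1 ∈ Kp n (q + 1) := by
  refine ⟨⟨Fct_mem_OCT a s q h1, Fct n s a q h2, Fct_mem_OCT s a q h2, ?_⟩, ?_⟩
  · funext x
    apply Fin.ext
    show a + min q ((s + min q ((a + min q (x.val - s)) - a)) - s) = a + min q (x.val - s)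
    omega
  · have hrange : Set.range (Fct n a s q h1) =
        Set.Icc (⟨a, by omega⟩ : Fin n) (⟨a + q, by omega⟩ : Fin n) := by
      ext z
      simp only [Set.mem_range, Set.mem_Icc, Fin.le_def, Fin.val_mk]
      constructor
      · rintro ⟨x, rfl⟩
        refine ⟨?_, ?_⟩
        · show a ≤ a + min q (x.val - s); omega
        · show a + min q (x.val - s) ≤ a + q; omega
      · rintro ⟨hz1, hz2⟩
        refine ⟨⟨s + ((z : ℕ) - a), by omega⟩, ?_⟩
        apply Fin.ext
        show a + min q ((s + ((z : ℕ) - a)) - s) = (z : ℕ)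
        omega
    unfold imCard
    rw [hrange, ← Finset.coe_Icc, Set.ncard_coe_finset, Fin.card_Icc]
    simp only [Fin.val_mk]
    omega

/-- Discrete intermediate value theorem for maps with steps bounded by 1. -/
lemma discrete_ivt {n : ℕ} (f : Function.End (Fin n))
    (hstep : ∀ (k : ℕ) (hk : k + 1 < n), (f ⟨k + 1, hk⟩ : ℕ) ≤ (f ⟨k, by omega⟩ : ℕ) + 1)
    (v : ℕ) :
    ∀ (d k : ℕ) (hk : k < n), (f ⟨k, hk⟩ : ℕ) ≤ v →
      (∃ m, ∃ hm : m < n, k ≤ m ∧ v ≤ (f ⟨m, hm⟩ : ℕ)) → n - 1 - k ≤ d →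
      ∃ x : Fin n, (f x : ℕ) = v := by
  intro d
  induction d with
  | zero =>
    rintro k hk hle ⟨m, hm, hkm, hge⟩ hd
    have hkm' : k = m := by omega
    subst hkm'
    exact ⟨⟨k, hk⟩, le_antisymm hle hge⟩
  | succ d ih =>
    rintro k hk hle ⟨m, hm, hkm, hge⟩ hd
    by_cases he : (f ⟨k, hk⟩ : ℕ) = v
    · exact ⟨⟨k, hk⟩, he⟩
    · have hlt : (f ⟨k, hk⟩ : ℕ) < v := by omega
      have hkm2 : k ≠ m := by
        rintro rfl
        exact he (le_antisymm hle hge)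
      have hk1 : k + 1 < n := by omega
      have hst := hstep k hk1
      exact ih (k + 1) hk1 (by omega) ⟨m, hm, by omega, hge⟩ (by omega)

lemma exists_rep {n p : ℕ} (hp : 1 ≤ p) (hn : 0 < n) (α : Function.End (Fin n))
    (hα : α ∈ Kp n p) :
    ∃ a s, ∃ h1 : a + (p - 1) < n, s + (p - 1) < n ∧ α = Fct n a s (p - 1) h1 := by
  obtain ⟨⟨⟨hc, hm⟩, β, ⟨hcβ, hmβ⟩, hreg⟩, hrank⟩ := hα
  have hm' : ∀ x y : Fin n, (x : ℕ) ≤ y → (α x : ℕ) ≤ α y := by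
    intro x y hxy
    exact hm (show x ≤ y from hxy)
  -- 2-sided Lipschitz bound from the contraction property
  have hlip : ∀ (f : Function.End (Fin n)), IsContraction f → ∀ x y : Fin n,
      (f y : ℕ) ≤ (f x : ℕ) + ((y : ℕ) - (x : ℕ)) + ((x : ℕ) - (y : ℕ)) := by
    intro f hf x y
    have h := hf x y
    have habs : |((x : ℕ) : ℤ) - ((y : ℕ) : ℤ)| =
        ((((y : ℕ) - (x : ℕ) : ℕ) + ((x : ℕ) - (y : ℕ) : ℕ) : ℕ) : ℤ) := by
      rcases le_total ((x : ℕ)) ((y : ℕ)) with h' | h'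
      · rw [abs_of_nonpos (by omega)]; omega
      · rw [abs_of_nonneg (by omega)]; omega
    rw [habs, abs_le] at h
    omega
  have hstep : ∀ (k : ℕ) (hk : k + 1 < n),
      (α ⟨k + 1, hk⟩ : ℕ) ≤ (α ⟨k, by omega⟩ : ℕ) + 1 := by
    intro k hk
    have h := hlip α hc ⟨k, by omega⟩ ⟨k + 1, hk⟩
    simp only [Fin.val_mk] at h
    omega
  have hn1 : n - 1 < n := by omega
  set a : ℕ := (α ⟨0, hn⟩ : ℕ) with ha
  set b : ℕ := (α ⟨n - 1, hn1⟩ : ℕ) with hb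
  have hmin : ∀ x : Fin n, a ≤ (α x : ℕ) := by
    intro x
    exact hm' ⟨0, hn⟩ x (by simp only [Fin.val_mk]; omega)
  have hmax : ∀ x : Fin n, (α x : ℕ) ≤ b := by
    intro x
    exact hm' x ⟨n - 1, hn1⟩ (by have := x.isLt; simp only [Fin.val_mk]; omega)
  have hab : a ≤ b := hmin _
  have hbn : b < n := (α ⟨n - 1, hn1⟩).isLt
  have han : a < n := by omega
  -- range is the interval [a, b]
  have hrange : Set.range α = Set.Icc (⟨a, han⟩ : Fin n) (⟨b, hbn⟩ : Fin n) := by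
    ext z
    simp only [Set.mem_range, Set.mem_Icc, Fin.le_def, Fin.val_mk]
    constructor
    · rintro ⟨x, rfl⟩
      exact ⟨hmin x, hmax x⟩
    · rintro ⟨hz1, hz2⟩
      obtain ⟨x, hx⟩ := discrete_ivt α hstep (z : ℕ) (n - 1) 0 hn hz1
        ⟨n - 1, hn1, by omega, hz2⟩ (by omega)
      exact ⟨x, Fin.ext hx⟩
  have hcard : b + 1 - a = p := by
    unfold imCard at hrank
    rw [hrange, ← Finset.coe_Icc, Set.ncard_coe_finset, Fin.card_Icc] at hrank
    simpa using hrank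
  have hbval : b = a + (p - 1) := by omega
  -- β is a section of α on the range
  have hsec : ∀ (v : ℕ) (hv : v < n), a ≤ v → v ≤ b → (α (β ⟨v, hv⟩) : ℕ) = v := by
    intro v hv hv1 hv2
    have hmem : (⟨v, hv⟩ : Fin n) ∈ Set.range α := by
      rw [hrange]; simp only [Set.mem_Icc, Fin.le_def, Fin.val_mk]; exact ⟨hv1, hv2⟩
    obtain ⟨x, hx⟩ := hmem
    have hfx := congrFun hreg x
    show (α (β (⟨v, hv⟩ : Fin n)) : ℕ) = v
    rw [← hx]
    have hfx' : α (β (α x)) = α x := hfx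
    rw [hfx', hx]
  set s : ℕ := (β ⟨a, han⟩ : ℕ) with hs
  -- consecutive transversal
  have key : ∀ i, i ≤ p - 1 → ∀ h : a + i < n, ((β ⟨a + i, h⟩ : Fin n) : ℕ) = s + i := by
    intro i
    induction i with
    | zero => intro _ h; simp [hs]
    | succ i ih =>
      intro hi h
      have hi' : i ≤ p - 1 := by omega
      have hain : a + i < n := by omega
      have hain1 : a + i + 1 < n := by omega
      have ihv := ih hi' hain
      have hlb := hlip β hcβ ⟨a + i, hain⟩ ⟨a + i + 1, hain1⟩
      simp only [Fin.val_mk] at hlb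
      have hstrict : (β ⟨a + i, hain⟩ : ℕ) < (β ⟨a + i + 1, hain1⟩ : ℕ) := by
        by_contra hcon
        push_neg at hcon
        have hmono := hm' _ _ hcon
        rw [hsec (a + i + 1) hain1 (by omega) (by omega),
            hsec (a + i) hain (by omega) (by omega)] at hmono
        omega
      have hfin : (⟨a + (i + 1), h⟩ : Fin n) = ⟨a + i + 1, hain1⟩ :=
        Fin.ext (by simp only [Fin.val_mk]; omega)
      rw [hfin]
      omega
  have hapn : a + (p - 1) < n := by omega
  have hkeyp := key (p - 1) le_rfl hapn
  have hsp : s + (p - 1) < n := by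
    have hlt := (β ⟨a + (p - 1), hapn⟩).isLt
    omega
  have hαs : ∀ i, i ≤ p - 1 → ∀ h : s + i < n, (α ⟨s + i, h⟩ : ℕ) = a + i := by
    intro i hi h
    have hain : a + i < n := by omega
    have h1 := key i hi hain
    have h2 := hsec (a + i) hain (by omega) (by omega)
    have h3 : β ⟨a + i, hain⟩ = ⟨s + i, h⟩ := Fin.ext (by simp only [Fin.val_mk]; omega)
    rw [h3] at h2
    exact h2
  refine ⟨a, s, hapn, hsp, ?_⟩
  funext x
  apply Fin.ext
  show (α x : ℕ) = a + min (p - 1) (x.val - s)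
  rcases le_or_gt (x : ℕ) s with hx | hx
  · have hsn : s + 0 < n := by omega
    have hub : (α x : ℕ) ≤ (α ⟨s + 0, hsn⟩ : ℕ) :=
      hm' _ _ (by simp only [Fin.val_mk]; omega)
    rw [hαs 0 (by omega) hsn] at hub
    have hlb := hmin x
    omega
  · rcases le_or_gt ((x : ℕ) - s) (p - 1) with hcase | hcase
    · have h3 : s + ((x : ℕ) - s) < n := x.isLt.trans_le' (by omega)
      have h4 := hαs ((x : ℕ) - s) hcase h3
      have h5 : (⟨s + ((x : ℕ) - s), h3⟩ : Fin n) = x :=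
        Fin.ext (by simp only [Fin.val_mk]; omega)
      rw [h5] at h4
      omega
    · have hub := hmax x
      have hlb : (α ⟨s + (p - 1), hsp⟩ : ℕ) ≤ (α x : ℕ) :=
        hm' _ _ (by simp only [Fin.val_mk]; omega)
      rw [hαs (p - 1) le_rfl hsp] at hlb
      omega

/-- for `n ≥ 4` and `1 ≤ p ≤ n - 2`, `K_p` is contained in the
subsemigroup generated by `K_{p+1}`. -/
theorem stmt_8 (n p : ℕ) (hn : 4 ≤ n) (hp1 : 1 ≤ p) (hp : p ≤ n - 2) :
    Kp n p ⊆ (Subsemigroup.closure (Kp n (p + 1)) : Set (Function.End (Fin n))) := by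
  intro α hα
  obtain ⟨a, s, h1, h2, rfl⟩ := exists_rep hp1 (by omega) α hα
  have hKp : Kp n (p + 1) = Kp n (p - 1 + 1 + 1) := by
    rw [show p + 1 = p - 1 + 1 + 1 by omega]
  rw [hKp]
  have hq : p - 1 + 2 < n := by omega
  have memF : ∀ b t (hb : b + (p - 1 + 1) < n), t + (p - 1 + 1) < n →
      Fct n b t (p - 1 + 1) hb ∈ Subsemigroup.closure (Kp n (p - 1 + 1 + 1)) := by
    intro b t hb ht
    exact Subsemigroup.subset_closure (Fct_mem_Kp b t (p - 1 + 1) hb ht)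
  by_cases hA : 1 ≤ s ∧ a + (p - 1) + 1 < n
  · -- bottom merge
    have heq : Fct n a s (p - 1) h1 =
        Fct n a 1 (p - 1 + 1) (by omega) * Fct n 0 (s - 1) (p - 1 + 1) (by omega) := by
      funext x
      apply Fin.ext
      show a + min (p - 1) (x.val - s) =
        a + min (p - 1 + 1) ((0 + min (p - 1 + 1) (x.val - (s - 1))) - 1)
      obtain ⟨hA1, _⟩ := hA
      omega
    rw [heq]
    exact mul_mem (memF a 1 (by omega) (by omega)) (memF 0 (s - 1) (by omega) (by omega))
  · by_cases hB : 1 ≤ a ∧ s + (p - 1) + 1 < n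
    · -- top merge
      have heq : Fct n a s (p - 1) h1 =
          Fct n (a - 1) 0 (p - 1 + 1) (by omega) * Fct n 1 s (p - 1 + 1) (by omega) := by
        funext x
        apply Fin.ext
        show a + min (p - 1) (x.val - s) =
          (a - 1) + min (p - 1 + 1) ((1 + min (p - 1 + 1) (x.val - s)) - 0)
        obtain ⟨hB1, _⟩ := hB
        omega
      rw [heq]
      exact mul_mem (memF (a - 1) 0 (by omega) (by omega)) (memF 1 s (by omega) (by omega))
    · push_neg at hA hB
      rcases Nat.eq_zero_or_pos s with hs0 | hs1
      · -- s = 0, hence a = 0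
        have ha0 : a = 0 := by
          by_contra h
          have := hB (by omega)
          omega
        have heq : Fct n a s (p - 1) h1 =
            Fct n 0 1 (p - 1 + 1) (by omega) * Fct n 0 0 (p - 1 + 1) (by omega) *
              Fct n 1 0 (p - 1 + 1) (by omega) := by
          funext x
          apply Fin.ext
          show a + min (p - 1) (x.val - s) = 0 + min (p - 1 + 1)
            ((0 + min (p - 1 + 1) ((1 + min (p - 1 + 1) (x.val - 0)) - 0)) - 1)
          omega
        rw [heq]
        exact mul_mem (mul_mem (memF 0 1 (by omega) (by omega))
          (memF 0 0 (by omega) (by omega))) (memF 1 0 (by omega) (by omega))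
      · -- s ≥ 1 and the boundary case a = s = n - (p-1) - 1
        have ha : a + (p - 1) + 1 ≥ n := by
          by_contra h
          have := hA hs1
          omega
        have hsn : s + (p - 1) + 1 ≥ n := by
          by_contra h
          have := hB (by omega)
          omega
        have heq : Fct n a s (p - 1) h1 =
            Fct n (a - 1) 0 (p - 1 + 1) (by omega) * Fct n 1 1 (p - 1 + 1) (by omega) *
              Fct n 0 (s - 1) (p - 1 + 1) (by omega) := by
          funext x
          apply Fin.ext
          have hx := x.isLt
          show a + min (p - 1) (x.val - s) = (a - 1) + min (p - 1 + 1)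
            ((1 + min (p - 1 + 1) ((0 + min (p - 1 + 1) (x.val - (s - 1))) - 1)) - 0)
          omega
        rw [heq]
        exact mul_mem (mul_mem (memF (a - 1) 0 (by omega) (by omega))
          (memF 1 1 (by omega) (by omega))) (memF 0 (s - 1) (by omega) (by omega))
end

section
/- Let n ≥ 4 and let L(n, n−1) = {α ∈ Reg(OCT_n) : |Im α| ≤ n − 1}. Then the rank of the semigroup L(n, n−1) is 2; that is, the minimum cardinality of a generating set of L(n, n−1) equals 2. -/
/-- `L(n,p)`: the elements of `Reg(OCT_n)` of rank at most `p`. -/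
def Lnp (n p : ℕ) : Set (Function.End (Fin n)) :=
  {α | α ∈ RegOCT n ∧ imCard α ≤ p}

/- ### Auxiliary material -/

instance finiteEnd {n : ℕ} : Finite (Function.End (Fin n)) :=
  inferInstanceAs (Finite (Fin n → Fin n))

lemma abs_helper_s10 (u v x y : ℕ) :
    |(u:ℤ) - (v:ℤ)| ≤ |(x:ℤ) - (y:ℤ)| ↔
      u ≤ v + max (x - y) (y - x) ∧ v ≤ u + max (x - y) (y - x) := by
  rcases abs_cases ((u:ℤ) - (v:ℤ)) with ⟨h1, h1'⟩ | ⟨h1, h1'⟩ <;>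
    rcases abs_cases ((x:ℤ) - (y:ℤ)) with ⟨h2, h2'⟩ | ⟨h2, h2'⟩ <;>
      rw [h1, h2] <;> omega

/-- The clamped-translation map `x ↦ min b (a + (x - t))`. -/
def cmap (n t a b : ℕ) : Function.End (Fin n) :=
  fun x => ⟨min (min b (n-1)) (a + ((x : ℕ) - t)), by have := x.isLt; omega⟩

lemma cmap_val (n t a b : ℕ) (x : Fin n) :
    ((cmap n t a b x : Fin n) : ℕ) = min (min b (n-1)) (a + ((x : ℕ) - t)) := rfl

def d2 (n : ℕ) : Function.End (Fin n) := fun x => ⟨(x : ℕ) - 1, by have := x.isLt; omega⟩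

def d4 (n : ℕ) : Function.End (Fin n) :=
  fun x => ⟨min ((x : ℕ) + 1) (n-1), by have := x.isLt; omega⟩

lemma d2_val {n : ℕ} (x : Fin n) : ((d2 n x : Fin n) : ℕ) = (x : ℕ) - 1 := rfl

lemma d4_val {n : ℕ} (x : Fin n) : ((d4 n x : Fin n) : ℕ) = min ((x : ℕ) + 1) (n-1) := rfl

lemma oct_cmap {n t a b : ℕ} : cmap n t a b ∈ OCT n := by
  constructor
  · intro x y
    rw [cmap_val, cmap_val, abs_helper_s10]
    have := x.isLt; have := y.isLt
    constructor <;> omega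
  · intro x y hxy
    have hxy' : (x : ℕ) ≤ (y : ℕ) := hxy
    rw [Fin.le_def, cmap_val, cmap_val]
    omega

lemma reg_cmap {n t a b : ℕ} (hab : a ≤ b) (hb : b < n) (ht : t + (b - a) ≤ n - 1) :
    cmap n t a b ∈ RegOCT n := by
  refine ⟨oct_cmap, cmap n a t (t + (b - a)), oct_cmap, ?_⟩
  funext x
  show cmap n t a b (cmap n a t (t + (b-a)) (cmap n t a b x)) = cmap n t a b x
  apply Fin.ext
  simp only [cmap_val]
  have := x.isLt
  omega

/-- The parametrized family generating `L(n, n-1)`. -/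
def QSet (n : ℕ) : Set (Function.End (Fin n)) :=
  {α | ∃ t a b : ℕ, a ≤ b ∧ b < n ∧ t + (b - a) ≤ n - 1 ∧ b - a ≤ n - 2 ∧ α = cmap n t a b}

lemma d2_mul {n : ℕ} {g : Function.End (Fin n)} (hg : g ∈ QSet n) : d2 n * g ∈ QSet n := by
  obtain ⟨t, a, b, hab, hb, ht, hba, rfl⟩ := hg
  refine ⟨min (t + (1 - a)) ((n-1) - ((b-1) - (a-1))), a - 1, b - 1,
    by omega, by omega, by omega, by omega, ?_⟩
  funext x
  show d2 n (cmap n t a b x) = _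
  apply Fin.ext
  rw [d2_val]
  simp only [cmap_val]
  have := x.isLt
  omega

lemma d4_mul {n : ℕ} {g : Function.End (Fin n)} (hg : g ∈ QSet n) : d4 n * g ∈ QSet n := by
  obtain ⟨t, a, b, hab, hb, ht, hba, rfl⟩ := hg
  refine ⟨t, min (a+1) (n-1), min (b+1) (n-1), by omega, by omega, by omega, by omega, ?_⟩
  funext x
  show d4 n (cmap n t a b x) = _
  apply Fin.ext
  rw [d4_val]
  simp only [cmap_val]
  have := x.isLt
  omega

lemma d2pow_mul {n : ℕ} : ∀ (k : ℕ) {g : Function.End (Fin n)},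
    g ∈ QSet n → d2 n ^ k * g ∈ QSet n
  | 0, g, hg => by rwa [pow_zero, one_mul]
  | k+1, g, hg => by
      have e : d2 n ^ (k+1) * g = d2 n ^ k * (d2 n * g) := by
        rw [pow_succ, mul_assoc]
      rw [e]
      exact d2pow_mul k (d2_mul hg)

lemma d4pow_mul {n : ℕ} : ∀ (k : ℕ) {g : Function.End (Fin n)},
    g ∈ QSet n → d4 n ^ k * g ∈ QSet n
  | 0, g, hg => by rwa [pow_zero, one_mul]
  | k+1, g, hg => by
      have e : d4 n ^ (k+1) * g = d4 n ^ k * (d4 n * g) := by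
        rw [pow_succ, mul_assoc]
      rw [e]
      exact d4pow_mul k (d4_mul hg)

lemma QSet_sub_L {n : ℕ} (hn : 4 ≤ n) : QSet n ⊆ Lnp n (n-1) := by
  rintro α ⟨t, a, b, hab, hb, ht, hba, rfl⟩
  refine ⟨reg_cmap hab hb ht, ?_⟩
  have hsub : Set.range (cmap n t a b) ⊆ Set.Icc (⟨a, by omega⟩ : Fin n) ⟨b, hb⟩ := by
    rintro _ ⟨x, rfl⟩
    simp only [Set.mem_Icc]
    constructor <;> rw [Fin.le_def] <;> simp only [cmap_val] <;> omega
  calc imCard (cmap n t a b) ≤ (Set.Icc (⟨a, by omega⟩ : Fin n) ⟨b, hb⟩).ncard :=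
        Set.ncard_le_ncard hsub (Set.toFinite _)
    _ = b + 1 - a := by
        rw [← Finset.coe_Icc, Set.ncard_coe_finset, Fin.card_Icc]
    _ ≤ n - 1 := by omega

lemma d2_mem_QSet {n : ℕ} (hn : 4 ≤ n) : d2 n ∈ QSet n := by
  refine ⟨1, 0, n-2, by omega, by omega, by omega, by omega, ?_⟩
  funext x; apply Fin.ext
  have := x.isLt
  show (x : ℕ) - 1 = min (min (n-2) (n-1)) (0 + ((x : ℕ) - 1))
  omega

lemma d4_mem_QSet {n : ℕ} (hn : 4 ≤ n) : d4 n ∈ QSet n := by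
  refine ⟨0, 1, n-1, by omega, by omega, by omega, by omega, ?_⟩
  funext x; apply Fin.ext
  have := x.isLt
  show min ((x:ℕ)+1) (n-1) = min (min (n-1) (n-1)) (1 + ((x : ℕ) - 0))
  omega

lemma d2_pow {n : ℕ} : ∀ (k : ℕ) (x : Fin n), ((d2 n ^ k) x : ℕ) = (x : ℕ) - k
  | 0, x => by rw [pow_zero]; show (x : ℕ) = (x : ℕ) - 0; omega
  | k+1, x => by
      rw [pow_succ]
      show ((d2 n ^ k) (d2 n x) : ℕ) = (x : ℕ) - (k+1)
      rw [d2_pow k (d2 n x)]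
      show ((x : ℕ) - 1) - k = (x : ℕ) - (k+1)
      omega

lemma d4_pow {n : ℕ} : ∀ (k : ℕ) (x : Fin n), ((d4 n ^ k) x : ℕ) = min ((x : ℕ) + k) (n-1)
  | 0, x => by
      rw [pow_zero]
      show (x : ℕ) = min ((x : ℕ) + 0) (n-1)
      have := x.isLt; omega
  | k+1, x => by
      rw [pow_succ]
      show ((d4 n ^ k) (d4 n x) : ℕ) = min ((x : ℕ) + (k+1)) (n-1)
      rw [d4_pow k (d4 n x)]
      show min (min ((x:ℕ)+1) (n-1) + k) (n-1) = min ((x : ℕ) + (k+1)) (n-1)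
      have := x.isLt; omega

lemma decomp {n t a b : ℕ} (hab : a ≤ b) (hb : b < n) (ht : t + (b - a) ≤ n - 1) :
    cmap n t a b = d2 n ^ (n-1-b) * (d4 n ^ ((n-1-b) + a) * d2 n ^ t) := by
  funext x
  apply Fin.ext
  show ((cmap n t a b x : Fin n) : ℕ) =
    ((d2 n ^ (n-1-b)) ((d4 n ^ ((n-1-b)+a)) ((d2 n ^ t) x)) : ℕ)
  rw [cmap_val, d2_pow, d4_pow, d2_pow]
  have := x.isLt
  omega

lemma QSet_mul {n : ℕ} {f g : Function.End (Fin n)}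
    (hf : f ∈ QSet n) (hg : g ∈ QSet n) : f * g ∈ QSet n := by
  obtain ⟨t, a, b, hab, hb, ht, hba, rfl⟩ := hf
  rw [decomp hab hb ht, mul_assoc, mul_assoc]
  exact d2pow_mul _ (d4pow_mul _ (d2pow_mul _ hg))

lemma spow {M : Type*} [Monoid M] (S : Subsemigroup M) {x : M} (hx : x ∈ S) :
    ∀ k : ℕ, x ^ (k+1) ∈ S
  | 0 => by simpa using hx
  | k+1 => by rw [pow_succ]; exact mul_mem (spow S hx k) hx

lemma mem3 {M : Type*} [Monoid M] (S : Subsemigroup M) {x y : M} (hx : x ∈ S) (hy : y ∈ S)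
    (i j k : ℕ) (h : i + j + k ≠ 0) : x ^ i * (y ^ j * x ^ k) ∈ S := by
  rcases i with _ | i <;> rcases j with _ | j <;> rcases k with _ | k <;>
    (try simp only [pow_zero, one_mul, mul_one]) <;>
    first
      | exact absurd rfl h
      | exact spow S hx _
      | exact spow S hy _
      | exact mul_mem (spow S hx _) (spow S hx _)
      | exact mul_mem (spow S hy _) (spow S hx _)
      | exact mul_mem (spow S hx _) (spow S hy _)
      | exact mul_mem (spow S hx _) (mul_mem (spow S hy _) (spow S hx _))

/-- Characterization: every regular order-preserving contraction is a clamped translation. -/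
lemma char_reg {n : ℕ} (hn : 0 < n) {α : Function.End (Fin n)} (hα : α ∈ RegOCT n) :
    ∃ t a b : ℕ, a ≤ b ∧ b < n ∧ t + (b - a) ≤ n - 1 ∧ α = cmap n t a b := by
  obtain ⟨⟨hc, hm⟩, β, ⟨hcb, hmb⟩, hreg⟩ := hα
  have hreg' : ∀ x, α (β (α x)) = α x := fun x => congrFun hreg x
  obtain ⟨z0, hz0⟩ : ∃ z : Fin n, (z:ℕ) = 0 := ⟨⟨0, hn⟩, rfl⟩
  obtain ⟨zN, hzN⟩ : ∃ z : Fin n, (z:ℕ) = n-1 := ⟨⟨n-1, by omega⟩, rfl⟩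
  obtain ⟨a, ha⟩ : ∃ a, a = ((α z0 : Fin n) : ℕ) := ⟨_, rfl⟩
  obtain ⟨b, hbe⟩ : ∃ b, b = ((α zN : Fin n) : ℕ) := ⟨_, rfl⟩
  have hb : b < n := by rw [hbe]; exact (α zN).isLt
  have hmle : ∀ u v : Fin n, (u:ℕ) ≤ (v:ℕ) → ((α u : Fin n):ℕ) ≤ ((α v : Fin n):ℕ) :=
    fun u v h => Fin.le_def.mp (hm (Fin.le_def.mpr h))
  have hmble : ∀ u v : Fin n, (u:ℕ) ≤ (v:ℕ) → ((β u : Fin n):ℕ) ≤ ((β v : Fin n):ℕ) :=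
    fun u v h => Fin.le_def.mp (hmb (Fin.le_def.mpr h))
  have hstepc : ∀ u v : Fin n,
      ((α u : Fin n):ℕ) ≤ ((α v : Fin n):ℕ) + max ((u:ℕ) - (v:ℕ)) ((v:ℕ) - (u:ℕ)) := by
    intro u v
    have h := hc u v
    rw [abs_helper_s10] at h
    exact h.1
  have hstepb : ∀ u v : Fin n,
      ((β u : Fin n):ℕ) ≤ ((β v : Fin n):ℕ) + max ((u:ℕ) - (v:ℕ)) ((v:ℕ) - (u:ℕ)) := by
    intro u v
    have h := hcb u v
    rw [abs_helper_s10] at h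
    exact h.1
  have hlow : ∀ x, a ≤ ((α x : Fin n):ℕ) := by
    intro x
    rw [ha]
    exact hmle z0 x (by omega)
  have hhigh : ∀ x, ((α x : Fin n):ℕ) ≤ b := by
    intro x
    rw [hbe]
    exact hmle x zN (by have := x.isLt; omega)
  have hab : a ≤ b := by have := hlow zN; omega
  have hsurj : ∀ y : ℕ, a ≤ y → y ≤ b → ∃ x : Fin n, ((α x : Fin n):ℕ) = y := by
    have key : ∀ k, k < n → ∀ y, a ≤ y → ∀ u : Fin n, (u:ℕ) = k →
        y ≤ ((α u : Fin n):ℕ) → ∃ x : Fin n, ((α x : Fin n):ℕ) = y := by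
      intro k
      induction k with
      | zero =>
        intro hk y h1 u hu h2
        have he : u = z0 := Fin.ext (by omega)
        rw [he] at h2
        exact ⟨z0, by omega⟩
      | succ k ih =>
        intro hk y h1 u hu h2
        obtain ⟨v, hv⟩ : ∃ v : Fin n, (v:ℕ) = k := ⟨⟨k, by omega⟩, rfl⟩
        by_cases hy : y ≤ ((α v : Fin n):ℕ)
        · exact ih (by omega) y h1 v hv hy
        · have h3 := hstepc u v
          exact ⟨u, by omega⟩
    intro y h1 h2
    exact key (n-1) (by omega) y h1 zN hzN (by omega)
  have hfix : ∀ u : Fin n, a ≤ (u:ℕ) → (u:ℕ) ≤ b → α (β u) = u := by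
    intro u h1 h2
    obtain ⟨x, hx⟩ := hsurj (u:ℕ) h1 h2
    have hxy : α x = u := Fin.ext hx
    have h := hreg' x
    rw [hxy] at h
    exact h
  obtain ⟨w0, hw0⟩ : ∃ w : Fin n, (w:ℕ) = a := ⟨⟨a, by omega⟩, rfl⟩
  obtain ⟨t, hte⟩ : ∃ t, t = ((β w0 : Fin n):ℕ) := ⟨_, rfl⟩
  have hbeta : ∀ i, i ≤ b - a → ∀ u : Fin n, (u:ℕ) = a + i → ((β u : Fin n):ℕ) = t + i := by
    intro i
    induction i with
    | zero =>
      intro _ u hu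
      have he : u = w0 := Fin.ext (by omega)
      rw [he]
      omega
    | succ i ih =>
      intro hi u hu
      obtain ⟨v, hv⟩ : ∃ v : Fin n, (v:ℕ) = a + i := ⟨⟨a+i, by omega⟩, rfl⟩
      have ihh := ih (by omega) v hv
      have hmono := hmble v u (by omega)
      have hcontr := hstepb u v
      have e1 := hfix v (by omega) (by omega)
      have e2 := hfix u (by omega) (by omega)
      have hne : ((β v : Fin n):ℕ) ≠ ((β u : Fin n):ℕ) := by
        intro hEq
        have hBeq : β v = β u := Fin.ext hEq
        rw [hBeq, e2] at e1
        have := congrArg Fin.val e1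
        omega
      omega
  have ht : t + (b - a) ≤ n - 1 := by
    obtain ⟨ub, hub⟩ : ∃ u : Fin n, (u:ℕ) = a + (b-a) := ⟨⟨a + (b-a), by omega⟩, rfl⟩
    have h1 := hbeta (b-a) (le_refl _) ub hub
    have h2 := (β ub).isLt
    omega
  have hat : ∀ i, i ≤ b - a → ∀ u : Fin n, (u:ℕ) = t + i → ((α u : Fin n):ℕ) = a + i := by
    intro i hi u hu
    obtain ⟨v, hv⟩ : ∃ v : Fin n, (v:ℕ) = a + i := ⟨⟨a+i, by omega⟩, rfl⟩
    have h1 := hfix v (by omega) (by omega)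
    have h2 := hbeta i hi v hv
    have he : β v = u := Fin.ext (by omega)
    rw [he] at h1
    rw [h1]
    omega
  refine ⟨t, a, b, hab, hb, ht, ?_⟩
  funext x
  apply Fin.ext
  rw [cmap_val]
  have hxlt := x.isLt
  by_cases h1 : (x:ℕ) ≤ t
  · obtain ⟨u, hu⟩ : ∃ u : Fin n, (u:ℕ) = t + 0 := ⟨⟨t+0, by omega⟩, rfl⟩
    have e0 := hat 0 (by omega) u hu
    have hm1 := hmle x u (by omega)
    have := hlow x
    omega
  · by_cases h2 : (x:ℕ) ≤ t + (b-a)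
    · have e := hat ((x:ℕ) - t) (by omega) x (by omega)
      omega
    · obtain ⟨u, hu⟩ : ∃ u : Fin n, (u:ℕ) = t + (b-a) := ⟨⟨t+(b-a), by omega⟩, rfl⟩
      have e := hat (b-a) (by omega) u hu
      have hm1 := hmle u x (by omega)
      have := hhigh x
      omega

lemma imCard_one {n : ℕ} : imCard (1 : Function.End (Fin n)) = n := by
  show (Set.range (1 : Function.End (Fin n))).ncard = n
  have h : Set.range (1 : Function.End (Fin n)) = Set.univ :=
    Set.eq_univ_of_forall (fun y => ⟨y, rfl⟩)
  rw [h, Set.ncard_univ, Nat.card_eq_fintype_card, Fintype.card_fin]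

lemma L_sub_closure {n : ℕ} (hn : 4 ≤ n) :
    Lnp n (n-1) ⊆ (Subsemigroup.closure {d2 n, d4 n} : Subsemigroup (Function.End (Fin n))) := by
  intro α hα
  obtain ⟨t, a, b, hab, hb, ht, hEq⟩ := char_reg (by omega) hα.1
  have him := hα.2
  subst hEq
  have hd2 : d2 n ∈ Subsemigroup.closure {d2 n, d4 n} :=
    Subsemigroup.subset_closure (by simp)
  have hd4 : d4 n ∈ Subsemigroup.closure {d2 n, d4 n} :=
    Subsemigroup.subset_closure (by simp)
  have hdec := decomp hab hb ht
  by_cases hzero : (n-1-b) + ((n-1-b) + a) + t = 0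
  · exfalso
    have hid : cmap n t a b = 1 := by
      funext x
      apply Fin.ext
      rw [cmap_val]
      show _ = (x : ℕ)
      have := x.isLt
      omega
    rw [hid, imCard_one] at him
    omega
  · rw [hdec]
    exact mem3 _ hd2 hd4 _ _ _ hzero

lemma closure_singleton_pow {M : Type*} [Monoid M] {f g : M}
    (h : g ∈ Subsemigroup.closure {f}) : ∃ k, f ^ (k+1) = g := by
  have hle : Subsemigroup.closure {f} ≤
      ⟨{g | ∃ k, f ^ (k+1) = g}, by
        rintro x y ⟨i, rfl⟩ ⟨j, rfl⟩
        exact ⟨i + j + 1, by rw [← pow_add]; congr 1; omega⟩⟩ := by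
    apply Subsemigroup.closure_le.mpr
    intro x hx
    rw [Set.mem_singleton_iff] at hx
    exact ⟨0, by rw [pow_one, hx]⟩
  exact hle h

lemma d2_ne_d4 {n : ℕ} (hn : 4 ≤ n) : d2 n ≠ d4 n := by
  intro h
  obtain ⟨z0, hz0⟩ : ∃ z : Fin n, (z:ℕ) = 0 := ⟨⟨0, by omega⟩, rfl⟩
  have h1 := congrArg Fin.val (congrFun h z0)
  rw [d2_val, d4_val] at h1
  omega

/-- for `n ≥ 4`, the rank of the semigroup `L(n, n-1)` is `2`. -/
theorem stmt_10 (n : ℕ) (hn : 4 ≤ n) :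
    IsLeast {k : ℕ | ∃ A : Set (Function.End (Fin n)), A ⊆ Lnp n (n - 1) ∧
      (Subsemigroup.closure A : Set (Function.End (Fin n))) = Lnp n (n - 1) ∧ A.ncard = k}
      2 := by
  constructor
  · -- membership: {d2, d4} generates
    refine ⟨{d2 n, d4 n}, ?_, ?_, Set.ncard_pair (d2_ne_d4 hn)⟩
    · intro f hf
      rw [Set.mem_insert_iff, Set.mem_singleton_iff] at hf
      rcases hf with rfl | rfl
      · exact QSet_sub_L hn (d2_mem_QSet hn)
      · exact QSet_sub_L hn (d4_mem_QSet hn)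
    · apply Set.Subset.antisymm
      · have hle : Subsemigroup.closure {d2 n, d4 n} ≤
            ⟨QSet n, fun hf hg => QSet_mul hf hg⟩ := by
          apply Subsemigroup.closure_le.mpr
          intro f hf
          rw [Set.mem_insert_iff, Set.mem_singleton_iff] at hf
          rcases hf with rfl | rfl
          · exact d2_mem_QSet hn
          · exact d4_mem_QSet hn
        intro f hf
        exact QSet_sub_L hn (hle hf)
      · exact L_sub_closure hn
  · -- lower bound
    rintro k ⟨A, hAL, hAcl, rfl⟩
    by_contra hlt
    push_neg at hlt
    have hd2L : d2 n ∈ Lnp n (n-1) := QSet_sub_L hn (d2_mem_QSet hn)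
    have hd4L : d4 n ∈ Lnp n (n-1) := QSet_sub_L hn (d4_mem_QSet hn)
    have h01 : A.ncard = 0 ∨ A.ncard = 1 := by omega
    rcases h01 with h | h
    · -- A empty
      have hA : A = ∅ := (Set.ncard_eq_zero (Set.toFinite A)).mp h
      subst hA
      rw [← hAcl] at hd2L
      have hle : Subsemigroup.closure (∅ : Set (Function.End (Fin n))) ≤
          ⟨(∅ : Set (Function.End (Fin n))), fun hx _ => absurd hx (Set.notMem_empty _)⟩ :=
        Subsemigroup.closure_le.mpr (Set.Subset.refl _)
      exact Set.notMem_empty _ (hle hd2L)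
    · -- A = {f}
      obtain ⟨f, rfl⟩ := Set.ncard_eq_one.mp h
      have hfL : f ∈ Lnp n (n-1) := hAL rfl
      obtain ⟨⟨hc, hm⟩, -⟩ := hfL.1
      rw [← hAcl] at hd2L hd4L
      obtain ⟨i, hi⟩ := closure_singleton_pow hd2L
      obtain ⟨j, hj⟩ := closure_singleton_pow hd4L
      obtain ⟨z0, hz0⟩ : ∃ z : Fin n, (z:ℕ) = 0 := ⟨⟨0, by omega⟩, rfl⟩
      obtain ⟨zN, hzN⟩ : ∃ z : Fin n, (z:ℕ) = n-1 := ⟨⟨n-1, by omega⟩, rfl⟩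
      -- monotone iteration chains
      have chain0 : ∀ (m : ℕ) (x : Fin n), x ≤ f x → (f^m) x ≤ (f^(m+1)) x := by
        intro m
        induction m with
        | zero => intro x hx; exact hx
        | succ m ih => intro x hx; exact ih (f x) (hm hx)
      have chainN : ∀ (m : ℕ) (x : Fin n), f x ≤ x → (f^(m+1)) x ≤ (f^m) x := by
        intro m
        induction m with
        | zero => intro x hx; exact hx
        | succ m ih => intro x hx; exact ih (f x) (hm hx)
      have h0le : z0 ≤ f z0 := Fin.le_def.mpr (by omega)
      have hNle : f zN ≤ zN := Fin.le_def.mpr (by have := (f zN).isLt; omega)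
      have le0 : ∀ m : ℕ, (f^1) z0 ≤ (f^(m+1)) z0 := by
        intro m
        induction m with
        | zero => exact le_refl _
        | succ m ih => exact le_trans ih (chain0 (m+1) z0 h0le)
      have leN : ∀ m : ℕ, (f^(m+1)) zN ≤ (f^1) zN := by
        intro m
        induction m with
        | zero => exact le_refl _
        | succ m ih => exact le_trans (chainN (m+1) zN hNle) ih
      -- f fixes the endpoints
      have hp1 : ∀ x : Fin n, ((f^1) x : Fin n) = f x := fun x => by rw [pow_one]
      have hf0 : f z0 = z0 := by
        have h3 := Fin.le_def.mp (le0 i)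
        rw [hi] at h3
        rw [hp1] at h3
        rw [d2_val] at h3
        apply Fin.ext
        omega
      have hfN : f zN = zN := by
        have h3 := Fin.le_def.mp (leN j)
        rw [hj] at h3
        rw [hp1] at h3
        rw [d4_val] at h3
        have := (f zN).isLt
        apply Fin.ext
        omega
      -- hence f = 1
      have hfid : f = 1 := by
        funext x
        apply Fin.ext
        have h1 := hc x z0
        rw [hf0, abs_helper_s10] at h1
        have h2 := hc zN x
        rw [hfN, abs_helper_s10] at h2
        have e : ((1 : Function.End (Fin n)) x) = x := rfl
        rw [e]
        have := x.isLt
        have := (f x).isLt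
        omega
      rw [hfid, one_pow] at hi
      obtain ⟨w, hw⟩ : ∃ w : Fin n, (w:ℕ) = 1 := ⟨⟨1, by omega⟩, rfl⟩
      have hcontra := congrArg Fin.val (congrFun hi w)
      have e1 : ((1 : Function.End (Fin n)) w) = w := rfl
      rw [e1, d2_val] at hcontra
      omega
end

section
/- For n ≥ 4, the rank of the semigroup Reg(OCT_n) of regular order-preserving full contractions of the chain [n] is 3; that is, the minimum cardinality of a subset of Reg(OCT_n) generating Reg(OCT_n) under composition equals 3. -/
/-! ### Auxiliary development -/

/-- canonical "clamp" form -/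
def Canon (n : ℕ) (α : Function.End (Fin n)) : Prop :=
  ∃ s lo hi : ℤ, 0 ≤ lo ∧ lo ≤ hi ∧ hi ≤ (n:ℤ) - 1 ∧
    ∀ x : Fin n, ((α x : ℕ) : ℤ) = max lo (min (((x:ℕ):ℤ) + s) hi)

def mkClamp (n : ℕ) (s lo hi : ℤ) (h0 : 0 ≤ lo) (h1 : lo ≤ hi) (h2 : hi ≤ (n:ℤ)-1) :
    Function.End (Fin n) :=
  fun x => ⟨(max lo (min (((x:ℕ):ℤ) + s) hi)).toNat, by omega⟩

lemma mkClamp_val {n : ℕ} (s lo hi : ℤ) (h0 : 0 ≤ lo) (h1 : lo ≤ hi) (h2 : hi ≤ (n:ℤ)-1)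
    (x : Fin n) : (((mkClamp n s lo hi h0 h1 h2 x : Fin n) : ℕ) : ℤ) =
      max lo (min (((x:ℕ):ℤ) + s) hi) := by
  simp only [mkClamp]; omega

lemma mkClamp_canon {n : ℕ} (s lo hi : ℤ) (h0 : 0 ≤ lo) (h1 : lo ≤ hi) (h2 : hi ≤ (n:ℤ)-1) :
    Canon n (mkClamp n s lo hi h0 h1 h2) :=
  ⟨s, lo, hi, h0, h1, h2, mkClamp_val s lo hi h0 h1 h2⟩

lemma canon_oct {n : ℕ} {α : Function.End (Fin n)} (h : Canon n α) : α ∈ OCT n := by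
  obtain ⟨s, lo, hi, h0, h1, h2, hv⟩ := h
  constructor
  · intro x y
    rw [hv x, hv y, Int.abs_eq_natAbs, Int.abs_eq_natAbs]
    omega
  · intro x y hxy
    rw [Fin.le_def]
    have := hv x; have := hv y
    have hxy' : (x:ℕ) ≤ (y:ℕ) := hxy
    omega

lemma canon_mul {n : ℕ} {α β : Function.End (Fin n)} (hα : Canon n α) (hβ : Canon n β) :
    Canon n (α * β) := by
  obtain ⟨s, lo, hi, h0, h1, h2, hv⟩ := hα
  obtain ⟨s', lo', hi', h0', h1', h2', hv'⟩ := hβ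
  refine ⟨s' + s, max lo (min (lo' + s) hi), max lo (min (hi' + s) hi), by omega, by omega,
    by omega, fun x => ?_⟩
  have e1 : (α * β) x = α (β x) := rfl
  rw [e1, hv (β x), hv' x]
  omega

lemma canon_reg {n : ℕ} {α : Function.End (Fin n)} (hn : 0 < n) (h : Canon n α) :
    α ∈ RegOCT n := by
  obtain ⟨s, lo, hi, h0, h1, h2, hv⟩ := h
  refine ⟨canon_oct ⟨s, lo, hi, h0, h1, h2, hv⟩, mkClamp n (-s) 0 ((n:ℤ)-1) le_rfl (by omega) le_rfl,
    canon_oct (mkClamp_canon _ _ _ _ _ _), ?_⟩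
  funext x
  have e1 : (α * mkClamp n (-s) 0 ((n:ℤ)-1) le_rfl (by omega) le_rfl * α) x
      = α (mkClamp n (-s) 0 ((n:ℤ)-1) le_rfl (by omega) le_rfl (α x)) := rfl
  rw [e1]
  apply Fin.ext
  have h3 := hv x
  have h4 := mkClamp_val (n := n) (-s) 0 ((n:ℤ)-1) le_rfl (by omega) le_rfl (α x)
  have h5 := hv (mkClamp n (-s) 0 ((n:ℤ)-1) le_rfl (by omega) le_rfl (α x))
  have hx : (x:ℕ) < n := x.isLt
  omega

/-- step bound from contraction+monotone -/
lemma oct_step {n : ℕ} {α : Function.End (Fin n)} (h : α ∈ OCT n) (x y : Fin n)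
    (hxy : (x:ℕ) + 1 = (y:ℕ)) : (α x : ℕ) ≤ (α y : ℕ) ∧ (α y : ℕ) ≤ (α x : ℕ) + 1 := by
  have h1 := h.1 x y
  have h2 : α x ≤ α y := h.2 (by rw [Fin.le_def]; omega)
  rw [Fin.le_def] at h2
  rw [Int.abs_eq_natAbs, Int.abs_eq_natAbs] at h1
  omega

/-- discrete IVT -/
lemma oct_surj_aux {n : ℕ} {α : Function.End (Fin n)} (h : α ∈ OCT n) :
    ∀ (k : ℕ) (x : Fin n) (c : ℕ) (hk : (x:ℕ) + k < n),
      (α x : ℕ) ≤ c → c ≤ (α ⟨(x:ℕ) + k, hk⟩ : ℕ) → ∃ z : Fin n, (α z : ℕ) = c := by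
  intro k
  induction k with
  | zero =>
    intro x c hk hc1 hc2
    refine ⟨x, ?_⟩
    have : (⟨(x:ℕ) + 0, hk⟩ : Fin n) = x := by apply Fin.ext; simp
    rw [this] at hc2
    omega
  | succ k ih =>
    intro x c hk hc1 hc2
    set x' : Fin n := ⟨(x:ℕ) + 1, by omega⟩ with hx'
    have hs := oct_step h x x' rfl
    by_cases hc : c ≤ (α x' : ℕ)
    · by_cases hc' : (α x' : ℕ) ≤ c
      · exact ⟨x', by omega⟩
      · exact ⟨x, by omega⟩
    · push_neg at hc
      have hk' : (x':ℕ) + k < n := by simp [hx']; omega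
      refine ih x' c hk' (by omega) ?_
      have : (⟨(x':ℕ) + k, hk'⟩ : Fin n) = ⟨(x:ℕ) + (k+1), hk⟩ := by apply Fin.ext; simp [hx']; omega
      rw [this]
      exact hc2

lemma reg_canon {n : ℕ} {α : Function.End (Fin n)} (hn : 0 < n) (h : α ∈ RegOCT n) :
    Canon n α := by
  obtain ⟨hα, β, hβ, hfix⟩ := h
  have hid : ∀ x : Fin n, α (β (α x)) = α x := by
    intro x
    have : (α * β * α) x = α (β (α x)) := rfl
    rw [← this, hfix]
  set z0 : Fin n := ⟨0, hn⟩ with hz0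
  set zn : Fin n := ⟨n-1, by omega⟩ with hzn
  set m : Fin n := α z0 with hm
  set M : Fin n := α zn with hM
  have hmM : (m:ℕ) ≤ (M:ℕ) := by
    have hle : z0 ≤ zn := by rw [Fin.le_def]; simp [hz0, hzn]
    have := hα.2 hle
    rw [Fin.le_def] at this; exact this
  have hlb : ∀ x : Fin n, (m:ℕ) ≤ (α x : ℕ) := by
    intro x
    have hle : z0 ≤ x := by rw [Fin.le_def]; simp [hz0]
    have := hα.2 hle
    rw [Fin.le_def] at this; exact this
  have hub : ∀ x : Fin n, (α x : ℕ) ≤ (M:ℕ) := by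
    intro x
    have hle : x ≤ zn := by rw [Fin.le_def]; simp [hzn]; omega
    have := hα.2 hle
    rw [Fin.le_def] at this; exact this
  have hsurj : ∀ c : ℕ, (m:ℕ) ≤ c → c ≤ (M:ℕ) → ∃ z : Fin n, (α z : ℕ) = c := by
    intro c h1 h2
    have hk : (z0:ℕ) + (n-1) < n := by simp [hz0]; omega
    apply oct_surj_aux hα (n-1) z0 c hk h1
    have : (⟨(z0:ℕ) + (n-1), hk⟩ : Fin n) = zn := by apply Fin.ext; simp [hz0, hzn]
    rw [this]; exact h2
  set i : Fin n := β m with hi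
  have claim : ∀ t : ℕ, (m:ℕ) + t ≤ (M:ℕ) →
      ∃ (h1 : (m:ℕ) + t < n) (h2 : (i:ℕ) + t < n),
        ((β ⟨(m:ℕ) + t, h1⟩ : Fin n) : ℕ) = (i:ℕ) + t ∧
        ((α ⟨(i:ℕ) + t, h2⟩ : Fin n) : ℕ) = (m:ℕ) + t := by
    intro t
    induction t with
    | zero =>
      intro ht
      refine ⟨by omega, by omega, ?_, ?_⟩
      · have e : (⟨(m:ℕ) + 0, by omega⟩ : Fin n) = m := by apply Fin.ext; simp
        rw [e, ← hi]; simp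
      · have e : (⟨(i:ℕ) + 0, by omega⟩ : Fin n) = i := by apply Fin.ext; simp
        rw [e, hi, hm, hid z0, ← hm]
        omega
    | succ t ih =>
      intro ht
      obtain ⟨h1, h2, e1, e2⟩ := ih (by omega)
      have h1' : (m:ℕ) + (t+1) < n := by omega
      obtain ⟨z, hz⟩ := hsurj ((m:ℕ) + (t+1)) (by omega) (by omega)
      have hza : α z = ⟨(m:ℕ) + (t+1), h1'⟩ := by apply Fin.ext; exact hz
      have hfz : α (β ⟨(m:ℕ) + (t+1), h1'⟩) = ⟨(m:ℕ) + (t+1), h1'⟩ := by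
        rw [← hza, hid z]
      have hstep := oct_step hβ ⟨(m:ℕ) + t, h1⟩ ⟨(m:ℕ) + (t+1), h1'⟩ rfl
      rw [e1] at hstep
      by_cases hcase : ((β ⟨(m:ℕ) + (t+1), h1'⟩ : Fin n) : ℕ) = (i:ℕ) + t
      · exfalso
        have : β ⟨(m:ℕ) + (t+1), h1'⟩ = ⟨(i:ℕ) + t, h2⟩ := by apply Fin.ext; exact hcase
        rw [this] at hfz
        have := congrArg (fun w : Fin n => (w:ℕ)) hfz
        simp at this
        omega
      · have hval : ((β ⟨(m:ℕ) + (t+1), h1'⟩ : Fin n) : ℕ) = (i:ℕ) + (t+1) := by omega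
        have h2' : (i:ℕ) + (t+1) < n := by rw [← hval]; exact (β _).isLt
        refine ⟨h1', h2', hval, ?_⟩
        have : β ⟨(m:ℕ) + (t+1), h1'⟩ = ⟨(i:ℕ) + (t+1), h2'⟩ := by apply Fin.ext; exact hval
        rw [this] at hfz
        exact congrArg (fun w : Fin n => (w:ℕ)) hfz
  refine ⟨(m:ℕ) - (i:ℕ), (m:ℕ), (M:ℕ), by omega, by omega, by omega, ?_⟩
  intro x
  rcases lt_trichotomy ((x:ℕ) : ℤ) ((i:ℕ) : ℤ) with hx | hx | hx
  · have hxi : α x ≤ α i := hα.2 (by rw [Fin.le_def]; omega)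
    rw [Fin.le_def] at hxi
    obtain ⟨_, h2, _, e2⟩ := claim 0 (by omega)
    have ei : (⟨(i:ℕ) + 0, h2⟩ : Fin n) = i := by apply Fin.ext; simp
    rw [ei] at e2
    have := hlb x
    omega
  · obtain ⟨_, h2, _, e2⟩ := claim 0 (by omega)
    have ei : (⟨(i:ℕ) + 0, h2⟩ : Fin n) = i := by apply Fin.ext; simp
    rw [ei] at e2
    have hxeq : x = i := by apply Fin.ext; omega
    rw [hxeq]
    omega
  · by_cases hx2 : (x:ℕ) ≤ (i:ℕ) + ((M:ℕ) - (m:ℕ))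
    · set t : ℕ := (x:ℕ) - (i:ℕ) with htdef
      obtain ⟨_, h2, _, e2⟩ := claim t (by omega)
      have ex : (⟨(i:ℕ) + t, h2⟩ : Fin n) = x := by apply Fin.ext; simp; omega
      rw [ex] at e2
      omega
    · set t : ℕ := (M:ℕ) - (m:ℕ) with htdef
      obtain ⟨_, h2, _, e2⟩ := claim t (by omega)
      have hge : α ⟨(i:ℕ) + t, h2⟩ ≤ α x := hα.2 (by rw [Fin.le_def]; simp; omega)
      rw [Fin.le_def] at hge
      have := hub x
      omega

section Gen
variable (n : ℕ)

def sg (hn : 2 ≤ n) : Function.End (Fin n) := mkClamp n (-1) 0 ((n:ℤ)-1) le_rfl (by omega) le_rfl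
def tg (hn : 2 ≤ n) : Function.End (Fin n) := mkClamp n 1 0 ((n:ℤ)-1) le_rfl (by omega) le_rfl

lemma one_canon (hn : 2 ≤ n) : Canon n (1 : Function.End (Fin n)) := by
  refine ⟨0, 0, (n:ℤ)-1, le_rfl, by omega, le_rfl, fun x => ?_⟩
  have : (1 : Function.End (Fin n)) x = x := rfl
  rw [this]
  have := x.isLt
  omega

lemma sg_pow_val (hn : 2 ≤ n) : ∀ (k : ℕ) (x : Fin n), ((((sg n hn)^k) x : ℕ) : ℤ)
    = max (((x:ℕ):ℤ) - k) 0 := by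
  intro k
  induction k with
  | zero => intro x; have : (sg n hn)^0 = 1 := pow_zero _
            rw [this]; have : (1 : Function.End (Fin n)) x = x := rfl
            rw [this]; omega
  | succ k ih =>
    intro x
    have e : ((sg n hn)^(k+1)) x = ((sg n hn)^k) (sg n hn x) := by
      rw [pow_succ]; rfl
    rw [e, ih (sg n hn x)]
    have := mkClamp_val (n := n) (-1) 0 ((n:ℤ)-1) le_rfl (by omega) le_rfl x
    have hx := x.isLt
    rw [show sg n hn x = mkClamp n (-1) 0 ((n:ℤ)-1) le_rfl (by omega) le_rfl x from rfl]
    omega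

lemma tg_pow_val (hn : 2 ≤ n) : ∀ (k : ℕ) (x : Fin n), ((((tg n hn)^k) x : ℕ) : ℤ)
    = min (((x:ℕ):ℤ) + k) ((n:ℤ)-1) := by
  intro k
  induction k with
  | zero => intro x; have : (tg n hn)^0 = 1 := pow_zero _
            rw [this]; have : (1 : Function.End (Fin n)) x = x := rfl
            rw [this]; have := x.isLt; omega
  | succ k ih =>
    intro x
    have e : ((tg n hn)^(k+1)) x = ((tg n hn)^k) (tg n hn x) := by
      rw [pow_succ]; rfl
    rw [e, ih (tg n hn x)]
    have := mkClamp_val (n := n) 1 0 ((n:ℤ)-1) le_rfl (by omega) le_rfl x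
    have hx := x.isLt
    rw [show tg n hn x = mkClamp n 1 0 ((n:ℤ)-1) le_rfl (by omega) le_rfl x from rfl]
    omega

lemma sg_val (hn : 2 ≤ n) (x : Fin n) :
    ((sg n hn x : ℕ) : ℤ) = max (((x:ℕ):ℤ) - 1) 0 := by
  have := sg_pow_val n hn 1 x
  rwa [pow_one] at this

lemma tg_val (hn : 2 ≤ n) (x : Fin n) :
    ((tg n hn x : ℕ) : ℤ) = min (((x:ℕ):ℤ) + 1) ((n:ℤ)-1) := by
  have := tg_pow_val n hn 1 x
  rwa [pow_one] at this

def cbot (hn : 2 ≤ n) : Function.End (Fin n) := mkClamp n 0 0 0 le_rfl le_rfl (by omega)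
def ctop (hn : 2 ≤ n) : Function.End (Fin n) :=
  mkClamp n 0 ((n:ℤ)-1) ((n:ℤ)-1) (by omega) le_rfl le_rfl

lemma cbot_val (hn : 2 ≤ n) (x : Fin n) : ((cbot n hn x : ℕ) : ℤ) = 0 := by
  have := mkClamp_val (n := n) 0 0 0 le_rfl le_rfl (by omega) x
  rw [show cbot n hn x = mkClamp n 0 0 0 le_rfl le_rfl (by omega) x from rfl, this]
  have := x.isLt
  omega

lemma ctop_val (hn : 2 ≤ n) (x : Fin n) : ((ctop n hn x : ℕ) : ℤ) = (n:ℤ)-1 := by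
  have := mkClamp_val (n := n) 0 ((n:ℤ)-1) ((n:ℤ)-1) (by omega) le_rfl le_rfl x
  rw [show ctop n hn x = mkClamp n 0 ((n:ℤ)-1) ((n:ℤ)-1) (by omega) le_rfl le_rfl x from rfl, this]
  have := x.isLt
  omega

lemma cbot_canon (hn : 2 ≤ n) : Canon n (cbot n hn) := mkClamp_canon _ _ _ _ _ _
lemma ctop_canon (hn : 2 ≤ n) : Canon n (ctop n hn) := mkClamp_canon _ _ _ _ _ _
lemma sg_canon (hn : 2 ≤ n) : Canon n (sg n hn) := mkClamp_canon _ _ _ _ _ _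
lemma tg_canon (hn : 2 ≤ n) : Canon n (tg n hn) := mkClamp_canon _ _ _ _ _ _

lemma pow_mem_closure {A : Set (Function.End (Fin n))} (h1 : (1 : Function.End (Fin n)) ∈ A)
    {g : Function.End (Fin n)} (hg : g ∈ Subsemigroup.closure A) :
    ∀ k : ℕ, g^k ∈ Subsemigroup.closure A := by
  intro k
  induction k with
  | zero => rw [pow_zero]; exact Subsemigroup.subset_closure h1
  | succ k ih => rw [pow_succ]; exact Subsemigroup.mul_mem _ ih hg

lemma canon_decomp (hn : 2 ≤ n) {α : Function.End (Fin n)} (h : Canon n α) :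
    α ∈ Subsemigroup.closure ({1, sg n hn, tg n hn} : Set (Function.End (Fin n))) := by
  obtain ⟨s, lo, hi, h0, h1, h2, hv⟩ := h
  set s' : ℤ := max (lo - ((n:ℤ)-1)) (min s hi) with hs'
  set a : ℕ := (max lo s').toNat with ha
  set b : ℕ := (max lo s' - s').toNat with hb
  set k : ℕ := ((n:ℤ) - 1 - hi + max lo s').toNat with hk
  have key : α = (tg n hn)^a * ((sg n hn)^k * ((tg n hn)^k * (sg n hn)^b)) := by
    funext x
    apply Fin.ext
    have e : ((tg n hn)^a * ((sg n hn)^k * ((tg n hn)^k * (sg n hn)^b))) x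
        = ((tg n hn)^a) (((sg n hn)^k) (((tg n hn)^k) (((sg n hn)^b) x))) := rfl
    have v1 := sg_pow_val n hn b x
    have v2 := tg_pow_val n hn k (((sg n hn)^b) x)
    have v3 := sg_pow_val n hn k (((tg n hn)^k) (((sg n hn)^b) x))
    have v4 := tg_pow_val n hn a (((sg n hn)^k) (((tg n hn)^k) (((sg n hn)^b) x)))
    have hvx := hv x
    have hx := x.isLt
    have goal : ((α x : ℕ) : ℤ)
        = (((((tg n hn)^a * ((sg n hn)^k * ((tg n hn)^k * (sg n hn)^b))) x : Fin n) : ℕ) : ℤ) := by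
      rw [e, v4, v3, v2, v1, hvx]
      omega
    omega
  rw [key]
  have hmem : ∀ g ∈ ({1, sg n hn, tg n hn} : Set (Function.End (Fin n))),
      g ∈ Subsemigroup.closure ({1, sg n hn, tg n hn} : Set (Function.End (Fin n))) :=
    fun g hg => Subsemigroup.subset_closure hg
  have h1m : (1 : Function.End (Fin n)) ∈ ({1, sg n hn, tg n hn} : Set (Function.End (Fin n))) :=
    Or.inl rfl
  refine Subsemigroup.mul_mem _ (pow_mem_closure n h1m (hmem _ (by right; right; rfl)) a)
    (Subsemigroup.mul_mem _ (pow_mem_closure n h1m (hmem _ (by right; left; rfl)) k)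
      (Subsemigroup.mul_mem _ (pow_mem_closure n h1m (hmem _ (by right; right; rfl)) k)
        (pow_mem_closure n h1m (hmem _ (by right; left; rfl)) b)))

lemma canon_surj_eq_one (hn : 2 ≤ n) {α : Function.End (Fin n)} (h : Canon n α)
    (hs : Function.Surjective α) : α = 1 := by
  obtain ⟨s, lo, hi, h0, h1, h2, hv⟩ := h
  obtain ⟨x0, hx0⟩ := hs ⟨0, by omega⟩
  obtain ⟨x1, hx1⟩ := hs ⟨n-1, by omega⟩
  have hv0 := hv x0
  have hv1 := hv x1
  have v0 : (α x0 : ℕ) = 0 := by rw [hx0]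
  have v1 : (α x1 : ℕ) = n - 1 := by rw [hx1]
  have hx0' := x0.isLt
  have hx1' := x1.isLt
  funext x
  apply Fin.ext
  have := hv x
  have : ((α x : ℕ) : ℤ) = ((x:ℕ):ℤ) := by rw [this]; have := x.isLt; omega
  have e1 : (1 : Function.End (Fin n)) x = x := rfl
  rw [e1]
  omega
end Gen

lemma reg_mul {n : ℕ} (hn : 0 < n) {α β : Function.End (Fin n)}
    (hα : α ∈ RegOCT n) (hβ : β ∈ RegOCT n) : α * β ∈ RegOCT n :=
  canon_reg hn (canon_mul (reg_canon hn hα) (reg_canon hn hβ))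

/-- the regular elements form a subsemigroup -/
def RegSub (n : ℕ) (hn : 0 < n) : Subsemigroup (Function.End (Fin n)) where
  carrier := RegOCT n
  mul_mem' := fun ha hb => reg_mul hn ha hb

lemma one_mem_of_gen {n : ℕ} (hn : 2 ≤ n) {A : Set (Function.End (Fin n))}
    (hsub : A ⊆ RegOCT n)
    (hcl : (Subsemigroup.closure A : Set (Function.End (Fin n))) = RegOCT n) :
    (1 : Function.End (Fin n)) ∈ A := by
  have h0n : 0 < n := by omega
  have h1reg : (1 : Function.End (Fin n)) ∈ RegOCT n := canon_reg h0n (one_canon n hn)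
  have h1cl : (1 : Function.End (Fin n)) ∈ Subsemigroup.closure A := by
    have : (1 : Function.End (Fin n)) ∈ (Subsemigroup.closure A : Set (Function.End (Fin n))) := by
      rw [hcl]; exact h1reg
    exact this
  have key : ∀ (x : Function.End (Fin n)) (hx : x ∈ Subsemigroup.closure A),
      Function.Surjective x → x = 1 ∧ x ∈ A := by
    intro x hx
    induction hx using Subsemigroup.closure_induction with
    | mem y hy =>
      intro hsurj
      exact ⟨canon_surj_eq_one n hn (reg_canon h0n (hsub hy)) hsurj, hy⟩
    | mul y z hy hz py pz =>
      intro hsurj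
      have hysurj : Function.Surjective y := by
        intro w
        obtain ⟨u, hu⟩ := hsurj w
        exact ⟨z u, hu⟩
      obtain ⟨hy1, _⟩ := py hysurj
      have hzsurj : Function.Surjective z := by
        rw [hy1, one_mul] at hsurj
        exact hsurj
      obtain ⟨hz1, hzA⟩ := pz hzsurj
      refine ⟨by rw [hy1, hz1, one_mul], ?_⟩
      rw [hy1, one_mul]
      exact hzA
  exact ((key 1 h1cl Function.surjective_id).2)


/-- for `n ≥ 4`, the rank of the semigroup `Reg(OCT_n)` is `3`. -/
theorem stmt_11 (n : ℕ) (hn : 4 ≤ n) :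
    IsLeast {k : ℕ | ∃ A : Set (Function.End (Fin n)), A ⊆ RegOCT n ∧
      (Subsemigroup.closure A : Set (Function.End (Fin n))) = RegOCT n ∧ A.ncard = k}
      3 := by
  have h0n : 0 < n := by omega
  have h2n : 2 ≤ n := by omega
  constructor
  · -- membership: {1, sg, tg} generates
    refine ⟨({1, sg n h2n, tg n h2n} : Set (Function.End (Fin n))), ?_, ?_, ?_⟩
    · intro g hg
      rcases hg with h | h | h
      · rw [h]; exact canon_reg h0n (one_canon n h2n)
      · rw [h]; exact canon_reg h0n (mkClamp_canon _ _ _ _ _ _)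
      · rw [h]; exact canon_reg h0n (mkClamp_canon _ _ _ _ _ _)
    · apply Set.eq_of_subset_of_subset
      · have hle : Subsemigroup.closure ({1, sg n h2n, tg n h2n} : Set (Function.End (Fin n)))
            ≤ RegSub n h0n := by
          apply Subsemigroup.closure_le.mpr
          intro g hg
          rcases hg with h | h | h
          · rw [h]; exact canon_reg h0n (one_canon n h2n)
          · rw [h]; exact canon_reg h0n (mkClamp_canon _ _ _ _ _ _)
          · rw [h]; exact canon_reg h0n (mkClamp_canon _ _ _ _ _ _)
        exact fun x hx => hle hx
      · intro x hx
        exact canon_decomp n h2n (reg_canon h0n hx)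
    · -- ncard = 3
      apply Set.ncard_eq_three.mpr
      refine ⟨1, sg n h2n, tg n h2n, ?_, ?_, ?_, rfl⟩
      · intro h
        set x : Fin n := ⟨n-1, by omega⟩ with hxd
        have h1 := congrFun h x
        have hval := congrArg (fun w : Fin n => ((w : ℕ) : ℤ)) h1
        have hv := sg_val n h2n x
        have e1 : ((1 : Function.End (Fin n)) x : ℕ) = (x : ℕ) := rfl
        simp only [hv, e1] at hval
        have hx : (x : ℕ) = n - 1 := rfl
        omega
      · intro h
        set x : Fin n := ⟨0, by omega⟩ with hxd
        have h1 := congrFun h x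
        have hval := congrArg (fun w : Fin n => ((w : ℕ) : ℤ)) h1
        have hv := tg_val n h2n x
        have e1 : ((1 : Function.End (Fin n)) x : ℕ) = (x : ℕ) := rfl
        simp only [hv, e1] at hval
        have hx : (x : ℕ) = 0 := rfl
        omega
      · intro h
        set x : Fin n := ⟨0, by omega⟩ with hxd
        have h1 := congrFun h x
        have hval := congrArg (fun w : Fin n => ((w : ℕ) : ℤ)) h1
        have hv1 := sg_val n h2n x
        have hv2 := tg_val n h2n x
        simp only [hv1, hv2] at hval
        have hx : (x : ℕ) = 0 := rfl
        omega
  · -- lower bound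
    rintro k ⟨A, hsub, hcl, hcard⟩
    by_contra hlt
    push_neg at hlt
    have hkle : A.ncard ≤ 2 := by omega
    have h1A : (1 : Function.End (Fin n)) ∈ A := one_mem_of_gen h2n hsub hcl
    -- all elements of A commute pairwise
    have hcomm : ∀ a ∈ A, ∀ b ∈ A, a * b = b * a := by
      intro a ha b hb
      by_cases ha1 : a = 1
      · rw [ha1, one_mul, mul_one]
      by_cases hb1 : b = 1
      · rw [hb1, one_mul, mul_one]
      by_cases hab : a = b
      · rw [hab]
      exfalso
      have hsub3 : ({1, a, b} : Set (Function.End (Fin n))) ⊆ A := by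
        intro g hg
        rcases hg with h | h | h
        · rw [h]; exact h1A
        · rw [h]; exact ha
        · rw [h]; exact hb
      have h3 : ({1, a, b} : Set (Function.End (Fin n))).ncard = 3 :=
        Set.ncard_eq_three.mpr ⟨1, a, b, fun h => ha1 h.symm, fun h => hb1 h.symm, hab, rfl⟩
      haveI : Finite (Function.End (Fin n)) := inferInstanceAs (Finite (Fin n → Fin n))
      have := Set.ncard_le_ncard hsub3 (Set.toFinite A)
      omega
    -- hence everything in the closure commutes
    have hcommcl : ∀ x ∈ Subsemigroup.closure A, ∀ y ∈ Subsemigroup.closure A,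
        x * y = y * x := by
      intro x hx y hy
      induction hx using Subsemigroup.closure_induction with
      | mem u hu =>
        induction hy using Subsemigroup.closure_induction with
        | mem v hv => exact hcomm u hu v hv
        | mul v w hv hw pv pw =>
          rw [← mul_assoc, pv, mul_assoc, pw, ← mul_assoc]
      | mul u v hu hv pu pv =>
        rw [mul_assoc, pv, ← mul_assoc, pu, mul_assoc]
    -- but the two constant maps don't commute
    have hc0reg : cbot n h2n ∈ RegOCT n := canon_reg h0n (cbot_canon n h2n)
    have hcNreg : ctop n h2n ∈ RegOCT n := canon_reg h0n (ctop_canon n h2n)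
    have hc0cl : cbot n h2n ∈ Subsemigroup.closure A := by
      have : cbot n h2n ∈ (Subsemigroup.closure A : Set (Function.End (Fin n))) := by
        rw [hcl]; exact hc0reg
      exact this
    have hcNcl : ctop n h2n ∈ Subsemigroup.closure A := by
      have : ctop n h2n ∈ (Subsemigroup.closure A : Set (Function.End (Fin n))) := by
        rw [hcl]; exact hcNreg
      exact this
    have hne := hcommcl (cbot n h2n) hc0cl (ctop n h2n) hcNcl
    set x : Fin n := ⟨0, by omega⟩ with hxd
    have h1 := congrFun hne x
    have hval := congrArg (fun w : Fin n => ((w : ℕ) : ℤ)) h1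
    have e1 : ((cbot n h2n * ctop n h2n) x) = cbot n h2n (ctop n h2n x) := rfl
    have e2 : ((ctop n h2n * cbot n h2n) x) = ctop n h2n (cbot n h2n x) := rfl
    rw [e1, e2] at hval
    have v1 := cbot_val n h2n (ctop n h2n x)
    have v2 := ctop_val n h2n (cbot n h2n x)
    simp only [v1, v2] at hval
    omega
end

section
/- Fix n ≥ 1 and 1 ≤ p ≤ n. Let J_p = {α ∈ Reg(ORCT_n) : |Im α| = p}, let K_p* = {α ∈ J_p : α is order-reversing}, let R_η = {α ∈ J_p : α is order-preserving and Im α = {1,…,p}}, and let L_{δ*} = {α ∈ J_p : α is order-reversing and the kernel classes of α are {1}, …, {p−1}, {p,…,n}}. Then every element of K_p* is a product of an element of R_η followed by an element of L_{δ*}; in particular K_p* is contained in the subsemigroup generated by R_η ∪ L_{δ*}. -/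
/-- `J_p`: the elements of `Reg(ORCT_n)` of rank exactly `p`. -/
def Jp (n p : ℕ) : Set (Function.End (Fin n)) :=
  {α | α ∈ RegORCT n ∧ imCard α = p}

/-- `R_η`: the order-preserving elements of `J_p` whose image is `{1, …, p}`
(i.e. `{0, …, p-1}` in `Fin n`). -/
def RetaJ (n p : ℕ) : Set (Function.End (Fin n)) :=
  {α | α ∈ Jp n p ∧ Monotone α ∧ Set.range α = {x : Fin n | (x : ℕ) < p}}

/-- `L_{δ*}`: the order-reversing elements of `J_p` whose kernel classes are
`{1}, …, {p-1}, {p, …, n}` (in `Fin n`: singletons `{0}, …, {p-2}` together with the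
block of indices `≥ p - 1`). -/
def LdeltaStar (n p : ℕ) : Set (Function.End (Fin n)) :=
  {α | α ∈ Jp n p ∧ Antitone α ∧
    ∀ x y : Fin n, α x = α y ↔ (x = y ∨ (p - 1 ≤ (x : ℕ) ∧ p - 1 ≤ (y : ℕ)))}

/-- `K_p^*`: the order-reversing elements of `J_p`. -/
def KpStar (n p : ℕ) : Set (Function.End (Fin n)) :=
  {α | α ∈ Jp n p ∧ Antitone α}

private lemma cast_abs (x y : ℕ) : |(x:ℤ) - (y:ℤ)| = ((x - y + (y - x) : ℕ) : ℤ) := by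
  rcases le_total x y with h | h
  · rw [abs_of_nonpos (by omega)]; push_cast [Nat.sub_eq_zero_of_le h, Nat.cast_sub h]; ring
  · rw [abs_of_nonneg (by omega)]; push_cast [Nat.sub_eq_zero_of_le h, Nat.cast_sub h]; ring

private lemma isContraction_iff {n : ℕ} (α : Function.End (Fin n)) :
    IsContraction α ↔ ∀ x y : Fin n,
      ((α x).val - (α y).val) + ((α y).val - (α x).val) ≤ (x.val - y.val) + (y.val - x.val) := by
  unfold IsContraction
  simp only [cast_abs, Nat.cast_le]

private lemma ncard_preIcc {n a b : ℕ} (hb : b < n) :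
    {x : Fin n | a ≤ x.val ∧ x.val ≤ b}.ncard = b + 1 - a := by
  have h2 : Fin.val '' {x : Fin n | a ≤ x.val ∧ x.val ≤ b} = Set.Icc a b := by
    ext c
    simp only [Set.mem_image, Set.mem_setOf_eq, Set.mem_Icc]
    constructor
    · rintro ⟨x, ⟨h1, h2⟩, rfl⟩; exact ⟨h1, h2⟩
    · rintro ⟨h1, h2⟩; exact ⟨⟨c, lt_of_le_of_lt h2 hb⟩, ⟨h1, h2⟩, rfl⟩
  rw [← Set.ncard_image_of_injective _ Fin.val_injective, h2, ← Finset.coe_Icc,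
    Set.ncard_coe_finset, Nat.card_Icc]

private lemma ivt_s12 {n : ℕ} (α : Function.End (Fin n))
    (hc : ∀ x y : Fin n,
      ((α x).val - (α y).val) + ((α y).val - (α x).val) ≤ (x.val - y.val) + (y.val - x.val))
    {c : ℕ} {xl : Fin n} (hl : xl.val = n - 1) (h1 : (α xl).val ≤ c)
    {x0 : Fin n} (h2 : c ≤ (α x0).val) :
    ∃ x : Fin n, (α x).val = c := by
  by_contra hne
  push_neg at hne
  set S := Finset.univ.filter (fun x : Fin n => c ≤ (α x).val) with hSdef
  have hS : S.Nonempty := ⟨x0, by simp [hSdef, h2]⟩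
  obtain ⟨x, hxmem, hxmax⟩ := Finset.exists_max_image S Fin.val hS
  simp only [hSdef, Finset.mem_filter, Finset.mem_univ, true_and] at hxmem
  have hxc := hne x
  by_cases hlast : x.val = n - 1
  · have hxeq : x = xl := Fin.ext (by omega)
    rw [hxeq] at hxmem hxc
    omega
  · have hxn : x.val + 1 < n := by have := x.isLt; omega
    have h5 : (α ⟨x.val + 1, hxn⟩).val < c := by
      by_contra hge
      push_neg at hge
      have hmem : (⟨x.val + 1, hxn⟩ : Fin n) ∈ S := by
        simp only [hSdef, Finset.mem_filter, Finset.mem_univ, true_and]; exact hge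
      have := hxmax _ hmem
      simp at this
    have h6 := hc x ⟨x.val + 1, hxn⟩
    simp only at h6
    omega

/-- every element of `K_p^*` is a product of an element of `R_η` followed
by an element of `L_{δ*}`; in particular `K_p^*` is contained in the subsemigroup
generated by `R_η ∪ L_{δ*}`. -/
theorem stmt_12 (n p : ℕ) (hn : 1 ≤ n) (hp1 : 1 ≤ p) (hpn : p ≤ n) :
    ∀ α ∈ KpStar n p,
      (∃ β ∈ RetaJ n p, ∃ γ ∈ LdeltaStar n p, α = γ * β) ∧
      α ∈ Subsemigroup.closure (RetaJ n p ∪ LdeltaStar n p) := by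
  rintro α ⟨⟨⟨⟨hcon, hmoa⟩, δ', ⟨hδcon, hδmoa⟩, hreg⟩, hrank⟩, hanti⟩
  have hn0 : (0:ℕ) < n := hn
  rw [isContraction_iff] at hcon
  set a := (α ⟨n-1, by omega⟩).val with hadef
  set b := (α ⟨0, hn0⟩).val with hbdef
  have hb_lt : b < n := (α ⟨0, hn0⟩).isLt
  have hbounds : ∀ x : Fin n, a ≤ (α x).val ∧ (α x).val ≤ b := by
    intro x
    constructor
    · exact Fin.le_def.mp (hanti (show x ≤ ⟨n-1, by omega⟩ by
        rw [Fin.le_def]; exact Nat.le_sub_one_of_lt x.isLt))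
    · exact Fin.le_def.mp (hanti (show (⟨0, hn0⟩ : Fin n) ≤ x by
        rw [Fin.le_def]; exact Nat.zero_le _))
  have hsurj : ∀ c : ℕ, a ≤ c → c ≤ b → ∃ x, (α x).val = c := by
    intro c h1 h2
    exact ivt_s12 α hcon (xl := ⟨n-1, by omega⟩) rfl h1 h2
  have hrangeα : Set.range α = {x : Fin n | a ≤ x.val ∧ x.val ≤ b} := by
    ext s
    simp only [Set.mem_range, Set.mem_setOf_eq]
    constructor
    · rintro ⟨x, rfl⟩; exact hbounds x
    · rintro ⟨h1, h2⟩
      obtain ⟨x, hx⟩ := hsurj s.val h1 h2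
      exact ⟨x, Fin.ext hx⟩
  have hab : a ≤ b := (hbounds ⟨0, hn0⟩).1
  have hba : b + 1 = a + p := by
    have h := hrank
    rw [imCard, hrangeα, ncard_preIcc hb_lt] at h
    omega
  have hpb : p - 1 ≤ b := by omega
  -- the three transformations
  set β : Function.End (Fin n) :=
    (fun x => ⟨b - (α x).val, Nat.lt_of_le_of_lt (Nat.sub_le _ _) hb_lt⟩) with hβdef
  set γ : Function.End (Fin n) :=
    (fun t => ⟨b - min t.val (p-1), Nat.lt_of_le_of_lt (Nat.sub_le _ _) hb_lt⟩) with hγdef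
  set g' : Function.End (Fin n) :=
    (fun s => ⟨b - s.val, Nat.lt_of_le_of_lt (Nat.sub_le _ _) hb_lt⟩) with hg'def
  have βval : ∀ x, (β x).val = b - (α x).val := by intro x; rw [hβdef]
  have γval : ∀ t, (γ t).val = b - min t.val (p-1) := by intro t; rw [hγdef]
  have g'val : ∀ s, (g' s).val = b - s.val := by intro s; rw [hg'def]
  -- composition
  have hcomp : α = γ * β := by
    funext x
    apply Fin.ext
    show (α x).val = (γ (β x)).val
    rw [γval, βval]
    have := hbounds x
    omega
  -- β facts
  have hβcon : IsContraction β := by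
    rw [isContraction_iff]
    intro x y
    have h1 := hcon x y
    have h2 := hbounds x
    have h3 := hbounds y
    simp only [βval]
    omega
  have hβmono : Monotone β := by
    intro x y hxy
    rw [Fin.le_def]
    simp only [βval]
    have h1 := Fin.le_def.mp (hanti hxy)
    have h2 := hbounds x
    have h3 := hbounds y
    omega
  have hβrange : Set.range β = {x : Fin n | (x : ℕ) < p} := by
    ext s
    simp only [Set.mem_range, Set.mem_setOf_eq]
    constructor
    · rintro ⟨x, rfl⟩
      rw [βval]
      have := hbounds x
      omega
    · intro hs
      obtain ⟨x, hx⟩ := hsurj (b - s.val) (by omega) (by omega)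
      exact ⟨x, Fin.ext (by rw [βval, hx]; omega)⟩
  have hβrank : imCard β = p := by
    have hsetp : {x : Fin n | (x : ℕ) < p} = {x : Fin n | 0 ≤ x.val ∧ x.val ≤ p - 1} := by
      ext x; simp only [Set.mem_setOf_eq]; omega
    rw [imCard, hβrange, hsetp, ncard_preIcc (by omega)]
    omega
  -- g' facts
  have hg'con : IsContraction g' := by
    rw [isContraction_iff]
    intro x y
    simp only [g'val]
    omega
  have hg'anti : Antitone g' := by
    intro x y h
    rw [Fin.le_def]
    simp only [g'val]
    have := Fin.le_def.mp h
    omega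
  -- regularity witness for β : ε = δ' * g'
  have hεcon : IsContraction (δ' * g') := fun x y =>
    le_trans (hδcon (g' x) (g' y)) (hg'con x y)
  have hεmoa : Monotone (δ' * g') ∨ Antitone (δ' * g') := by
    rcases hδmoa with h | h
    · exact Or.inr (fun x y hxy => h (hg'anti hxy))
    · exact Or.inl (fun x y hxy => h (hg'anti hxy))
  have hregβ : β * (δ' * g') * β = β := by
    funext x
    apply Fin.ext
    show (β (δ' (g' (β x)))).val = (β x).val
    have hg : g' (β x) = α x := by
      apply Fin.ext
      rw [g'val, βval]
      have := hbounds x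
      omega
    rw [hg]
    have hreg' : α (δ' (α x)) = α x := congrFun hreg x
    simp only [βval, hreg']
  -- γ facts
  have hγcon : IsContraction γ := by
    rw [isContraction_iff]
    intro x y
    simp only [γval]
    omega
  have hγanti : Antitone γ := by
    intro x y h
    rw [Fin.le_def]
    simp only [γval]
    have := Fin.le_def.mp h
    omega
  have hregγ : γ * g' * γ = γ := by
    funext x
    apply Fin.ext
    show (γ (g' (γ x))).val = (γ x).val
    simp only [γval, g'val]
    omega
  have hγrange : Set.range γ = {x : Fin n | a ≤ x.val ∧ x.val ≤ b} := by
    ext s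
    simp only [Set.mem_range, Set.mem_setOf_eq]
    constructor
    · rintro ⟨t, rfl⟩
      rw [γval]
      omega
    · rintro ⟨h1, h2⟩
      refine ⟨⟨b - s.val, by omega⟩, Fin.ext ?_⟩
      rw [γval]
      simp only
      omega
  have hγrank : imCard γ = p := by
    rw [imCard, hγrange, ncard_preIcc hb_lt]
    omega
  have hγker : ∀ x y : Fin n, γ x = γ y ↔ (x = y ∨ (p - 1 ≤ (x : ℕ) ∧ p - 1 ≤ (y : ℕ))) := by
    intro x y
    constructor
    · intro h
      have hv : (γ x).val = (γ y).val := congrArg Fin.val h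
      simp only [γval] at hv
      rcases Nat.lt_or_ge x.val (p-1) with h1 | h1
      · left; apply Fin.ext; omega
      · rcases Nat.lt_or_ge y.val (p-1) with h2 | h2
        · left; apply Fin.ext; omega
        · right; exact ⟨h1, h2⟩
    · rintro (rfl | ⟨h1, h2⟩)
      · rfl
      · apply Fin.ext
        simp only [γval]
        omega
  -- assemble memberships
  have hβmem : β ∈ RetaJ n p :=
    ⟨⟨⟨⟨hβcon, Or.inl hβmono⟩, δ' * g', ⟨hεcon, hεmoa⟩, hregβ⟩, hβrank⟩, hβmono, hβrange⟩
  have hγmem : γ ∈ LdeltaStar n p :=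
    ⟨⟨⟨⟨hγcon, Or.inr hγanti⟩, g', ⟨hg'con, Or.inr hg'anti⟩, hregγ⟩, hγrank⟩, hγanti, hγker⟩
  refine ⟨⟨β, hβmem, γ, hγmem, hcomp⟩, ?_⟩
  rw [hcomp]
  exact mul_mem (Subsemigroup.subset_closure (Set.mem_union_right _ hγmem))
    (Subsemigroup.subset_closure (Set.mem_union_left _ hβmem))
end
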